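/- arXiv:math/0201002 — 3 statements merged into one kernel-verified Lean document; each statement's English description precedes it below -/
import Mathlib

section
/- Let G be a finitely generated group which is residually free, i.e., for every g ∈ G with g ≠ 1 there exists a free group F and a group homomorphism φ : G → F with φ(g) ≠ 1. Then the Frattini subgroup F(G) of G is trivial. -/
open Finset in
private lemma exists_perm_extend {γ : Type*} [Fintype γ] [DecidableEq γ]
    (s : Finset γ) (f : γ → γ) (hinj : Set.InjOn f s) :
    ∃ σ : Equiv.Perm γ, ∀ x ∈ s, σ x = f x := by
  classical
  have hc : Fintype.card (↥(sᶜ)) = Fintype.card (↥((s.image f)ᶜ)) := by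
    rw [Fintype.card_coe, Fintype.card_coe, card_compl, card_compl,
      Finset.card_image_of_injOn hinj]
  let e := Fintype.equivOfCardEq hc
  let g : γ → γ := fun x => if hx : x ∈ s then f x else (e ⟨x, by simp [hx]⟩ : γ)
  have hg : ∀ x ∈ s, g x = f x := fun x hx => by simp [g, hx]
  have hmem : ∀ x, x ∉ s → (g x) ∈ (s.image f)ᶜ := fun x hx => by
    simpa [g, hx] using (e ⟨x, by simp [hx]⟩).2
  have hginj : Function.Injective g := by
    intro x y hxy
    by_cases hx : x ∈ s <;> by_cases hy : y ∈ s
    · exact hinj hx hy (by rwa [hg x hx, hg y hy] at hxy)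
    · exfalso
      have h1 : g x ∈ s.image f := by rw [hg x hx]; exact mem_image_of_mem f hx
      rw [hxy] at h1
      exact (mem_compl.mp (hmem y hy)) h1
    · exfalso
      have h1 : g y ∈ s.image f := by rw [hg y hy]; exact mem_image_of_mem f hy
      rw [← hxy] at h1
      exact (mem_compl.mp (hmem x hx)) h1
    · have h2 : e ⟨x, by simp [hx]⟩ = e ⟨y, by simp [hy]⟩ := by
        apply Subtype.ext
        simpa [g, hx, hy] using hxy
      exact Subtype.mk_eq_mk.mp (e.injective h2)
  refine ⟨Equiv.ofBijective g (Finite.injective_iff_bijective.mp hginj), fun x hx => ?_⟩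
  simp [Equiv.ofBijective_apply, hg x hx]

private lemma isCoatom_of_index_prime {G : Type*} [Group G] {K : Subgroup G} {p : ℕ}
    (hp : p.Prime) (h : K.index = p) : IsCoatom K := by
  constructor
  · intro htop
    rw [htop, Subgroup.index_top] at h
    exact hp.one_lt.ne' h.symm
  · intro J hKJ
    have hdvd : J.index ∣ p := h ▸ Subgroup.index_dvd_of_le hKJ.le
    rcases (Nat.Prime.eq_one_or_self_of_dvd hp _ hdvd) with h1 | hp'
    · exact Subgroup.index_eq_one.mp h1
    · exfalso
      have hrel := Subgroup.relIndex_mul_index hKJ.le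
      rw [h, hp'] at hrel
      have h1 : K.relIndex J = 1 :=
        Nat.eq_of_mul_eq_mul_right hp.pos (hrel.trans (one_mul p).symm)
      exact hKJ.not_ge (Subgroup.relIndex_eq_one.mp h1)

/-- positive-letter constraint: position `n-1-j` carries letter `(a, true)`,
forcing `σ a` to map `j ↦ j+1`. -/
private def PC {β : Type*} (ℓ : ℕ → β × Bool) (n : ℕ) (a : β) (j : ℕ) : Prop :=
  j < n ∧ ℓ (n - 1 - j) = (a, true)

/-- negative-letter constraint: position `n-j` carries letter `(a, false)`,
forcing `σ a` to map `j ↦ j-1`. -/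
private def NC {β : Type*} (ℓ : ℕ → β × Bool) (n : ℕ) (a : β) (j : ℕ) : Prop :=
  1 ≤ j ∧ j ≤ n ∧ ℓ (n - j) = (a, false)

open scoped Classical in
/-- the required partial behaviour of the permutation attached to generator `a`. -/
private noncomputable def fN {β : Type*} (ℓ : ℕ → β × Bool) (n : ℕ) (a₀ : β) (x₀ p : ℕ)
    (a : β) (j : ℕ) : ℕ :=
  if PC ℓ n a j then j + 1
  else if NC ℓ n a j then j - 1
  else if a = a₀ ∧ j = x₀ then n + 1
  else if a = a₀ ∧ n + 1 ≤ j ∧ j ≤ p - 2 then j + 1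
  else j

open scoped Classical in
/-- the domain on which the behaviour of the permutation of `a` is prescribed. -/
private noncomputable def domN {β : Type*} (ℓ : ℕ → β × Bool) (n : ℕ) (a₀ : β) (x₀ p : ℕ)
    (a : β) : Finset ℕ :=
  (Finset.range p).filter
    (fun j => PC ℓ n a j ∨ NC ℓ n a j ∨ (a = a₀ ∧ (j = x₀ ∨ (n + 1 ≤ j ∧ j ≤ p - 2))))

private lemma exists_coatom_not_mem {β : Type*} (w : FreeGroup β) (hw : w ≠ 1) :
    ∃ K : Subgroup (FreeGroup β), IsCoatom K ∧ w ∉ K := by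
  classical
  -- set up the reduced word
  set L := w.toWord with hLdef
  set n := L.length with hn
  have hLred : FreeGroup.reduce L = L := FreeGroup.reduce_toWord w
  have hLw : FreeGroup.mk L = w := FreeGroup.mk_toWord
  have hL0 : L ≠ [] := fun h => hw (FreeGroup.toWord_eq_nil_iff.mp h)
  have hn0 : 0 < n := List.length_pos_iff.mpr hL0
  set ℓ : ℕ → β × Bool := fun k => L.getD k (L.head hL0) with hℓdef
  have hℓget : ∀ k, k < n → ∀ (h : k < L.length), ℓ k = L[k] := by
    intro k hk h
    simp only [hℓdef]
    exact List.getD_eq_getElem L _ h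
  -- reducedness in adjacent-letter form
  have hred : ∀ k, k + 1 < n → ¬((ℓ (k+1)).1 = (ℓ k).1 ∧ (ℓ (k+1)).2 = !(ℓ k).2) := by
    rintro k hk ⟨h1, h2⟩
    have hkL : k < L.length := by omega
    have hkL1 : k + 1 < L.length := by omega
    have e1 : L.drop k = ℓ k :: L.drop (k+1) := by
      rw [hℓget k (by omega) hkL]; exact List.drop_eq_getElem_cons hkL
    have e2 : L.drop (k+1) = ℓ (k+1) :: L.drop (k+2) := by
      rw [hℓget (k+1) (by omega) hkL1]; exact List.drop_eq_getElem_cons hkL1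
    have hdecomp : L = L.take k ++ ℓ k :: ℓ (k+1) :: L.drop (k+2) := by
      conv_lhs => rw [← List.take_append_drop k L, e1, e2]
    have hadj : ℓ (k+1) = ((ℓ k).1, !(ℓ k).2) := by
      rw [← h1, ← h2]
    have : FreeGroup.reduce L =
        L.take k ++ ((ℓ k).1, (ℓ k).2) :: ((ℓ k).1, !(ℓ k).2) :: L.drop (k+2) := by
      rw [hLred]
      conv_lhs => rw [hdecomp]
      rw [← hadj]
    exact FreeGroup.reduce.not this
  -- particular consequences of reducedness
  have hPN : ∀ a j, PC ℓ n a j → NC ℓ n a j → False := by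
    rintro a j ⟨hj, hpos⟩ ⟨hj1, hjn, hneg⟩
    have hkey : n - j = (n - 1 - j) + 1 := by omega
    refine hred (n - 1 - j) (by omega) ⟨?_, ?_⟩
    · rw [← hkey, hneg, hpos]
    · rw [← hkey, hneg, hpos]
      rfl
  have hPNsame : ∀ a j, PC ℓ n a j → NC ℓ n a (j + 1) → False := by
    rintro a j ⟨hj, hpos⟩ ⟨hj1, hjn, hneg⟩
    have : n - (j + 1) = n - 1 - j := by omega
    rw [this, hpos] at hneg
    simp at hneg
  have hPNcross : ∀ a j, PC ℓ n a j → NC ℓ n a (j + 2) → False := by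
    rintro a j ⟨hj, hpos⟩ ⟨hj1, hjn, hneg⟩
    have h1 : n - (j + 2) = (n - 1 - j) - 1 := by omega
    have h2 : ((n - 1 - j) - 1) + 1 = n - 1 - j := by omega
    refine hred ((n - 1 - j) - 1) (by omega) ⟨?_, ?_⟩
    · rw [h2, hpos, ← h1, hneg]
    · rw [h2, hpos, ← h1, hneg]
      rfl
  -- choose the bridging generator and a free point `x₀ ≤ n`
  set a₀ : β := (ℓ 0).1 with ha₀
  have hx₀ : ∃ x₀, x₀ ≤ n ∧ ¬ PC ℓ n a₀ x₀ ∧ ¬ NC ℓ n a₀ x₀ := by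
    by_contra hcon
    push_neg at hcon
    have hsub : Finset.range (n + 1) ⊆
        (Finset.range (n + 1)).filter (fun j => PC ℓ n a₀ j ∨ NC ℓ n a₀ j) := by
      intro j hj
      rw [Finset.mem_range] at hj
      refine Finset.mem_filter.mpr ⟨Finset.mem_range.mpr hj, ?_⟩
      by_cases hp : PC ℓ n a₀ j
      · exact Or.inl hp
      · exact Or.inr (hcon j (by omega) hp)
    have hcard : (Finset.range (n + 1)).card ≤
        ((Finset.range (n + 1)).filter (fun j => PC ℓ n a₀ j ∨ NC ℓ n a₀ j)).card :=
      Finset.card_le_card hsub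
    have hinj : ((Finset.range (n + 1)).filter
        (fun j => PC ℓ n a₀ j ∨ NC ℓ n a₀ j)).card ≤ (Finset.range n).card := by
      apply Finset.card_le_card_of_injOn
        (fun j => if PC ℓ n a₀ j then n - 1 - j else n - j)
      · intro j hj
        rw [Finset.mem_coe, Finset.mem_filter] at hj
        rcases hj.2 with hp | hq
        · dsimp only; rw [if_pos hp, Finset.mem_coe, Finset.mem_range]; omega
        · have hnp : ¬ PC ℓ n a₀ j := fun hp => hPN _ _ hp hq
          dsimp only; rw [if_neg hnp, Finset.mem_coe, Finset.mem_range]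
          obtain ⟨h1, h2, _⟩ := hq
          omega
      · intro j hj j' hj' heq
        rw [Finset.coe_filter] at hj hj'
        obtain ⟨hjr, hcj⟩ := hj
        obtain ⟨hjr', hcj'⟩ := hj'
        dsimp only at heq
        by_cases hp : PC ℓ n a₀ j <;> by_cases hp' : PC ℓ n a₀ j'
        · rw [if_pos hp, if_pos hp'] at heq
          have := hp.1; have := hp'.1; omega
        · rw [if_pos hp, if_neg hp'] at heq
          have hq' : NC ℓ n a₀ j' := hcj'.resolve_left hp'
          have h1 := hq'.1; have h2 := hq'.2.1
          have hjj : j' = j + 1 := by have := hp.1; omega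
          exact absurd (hPNsame a₀ j hp (hjj ▸ hq')) not_false
        · rw [if_neg hp, if_pos hp'] at heq
          have hq : NC ℓ n a₀ j := hcj.resolve_left hp
          have h1 := hq.1; have h2 := hq.2.1
          have hjj : j = j' + 1 := by have := hp'.1; omega
          exact absurd (hPNsame a₀ j' hp' (hjj ▸ hq)) not_false
        · rw [if_neg hp, if_neg hp'] at heq
          have hq : NC ℓ n a₀ j := hcj.resolve_left hp
          have hq' : NC ℓ n a₀ j' := hcj'.resolve_left hp'
          obtain ⟨h1, h2, _⟩ := hq
          obtain ⟨h1', h2', _⟩ := hq'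
          omega
    rw [Finset.card_range] at hcard
    rw [Finset.card_range] at hinj
    omega
  obtain ⟨x₀, hx₀n, hx₀p, hx₀q⟩ := hx₀
  -- choose a prime p ≥ n + 2
  obtain ⟨p, hpn, hp⟩ := Nat.exists_infinite_primes (n + 2)
  haveI : Fact p.Prime := ⟨hp⟩
  haveI : NeZero p := ⟨hp.pos.ne'⟩
  -- the prescribed behaviour stays below `p`
  have hflt : ∀ a j, j < p → fN ℓ n a₀ x₀ p a j < p := by
    intro a j hj
    unfold fN
    split_ifs with h1 h2 h3 h4
    · have := h1.1; omega
    · omega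
    · omega
    · omega
    · omega
  -- case analysis for membership in `domN`
  have hcases : ∀ a j, j ∈ domN ℓ n a₀ x₀ p a →
      (PC ℓ n a j ∧ fN ℓ n a₀ x₀ p a j = j + 1) ∨
      (NC ℓ n a j ∧ fN ℓ n a₀ x₀ p a j = j - 1) ∨
      (a = a₀ ∧ j = x₀ ∧ fN ℓ n a₀ x₀ p a j = n + 1) ∨
      (a = a₀ ∧ n + 1 ≤ j ∧ j ≤ p - 2 ∧ fN ℓ n a₀ x₀ p a j = j + 1) := by
    intro a j hj
    rw [domN, Finset.mem_filter, Finset.mem_range] at hj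
    obtain ⟨hjp, hcase⟩ := hj
    by_cases h1 : PC ℓ n a j
    · exact Or.inl ⟨h1, by rw [fN, if_pos h1]⟩
    by_cases h2 : NC ℓ n a j
    · exact Or.inr (Or.inl ⟨h2, by rw [fN, if_neg h1, if_pos h2]⟩)
    rcases hcase with h | h | ⟨ha, h⟩
    · exact absurd h h1
    · exact absurd h h2
    rcases h with heqx | h
    · refine Or.inr (Or.inr (Or.inl ⟨ha, heqx, ?_⟩))
      rw [fN, if_neg h1, if_neg h2, if_pos ⟨ha, heqx⟩]
    · have hne : ¬ (a = a₀ ∧ j = x₀) := by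
        rintro ⟨-, rfl⟩
        omega
      refine Or.inr (Or.inr (Or.inr ⟨ha, h.1, h.2, ?_⟩))
      rw [fN, if_neg h1, if_neg h2, if_neg hne, if_pos ⟨ha, h⟩]
  -- injectivity of the prescribed behaviour on `domN`
  have hNinj : ∀ a, ∀ j ∈ domN ℓ n a₀ x₀ p a, ∀ j' ∈ domN ℓ n a₀ x₀ p a,
      fN ℓ n a₀ x₀ p a j = fN ℓ n a₀ x₀ p a j' → j = j' := by
    intro a j hj j' hj' heq
    rcases hcases a j hj with ⟨h, hf⟩ | ⟨h, hf⟩ | ⟨ha, hx, hf⟩ | ⟨ha, h1, h2, hf⟩ <;>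
      rcases hcases a j' hj' with ⟨h', hf'⟩ | ⟨h', hf'⟩ | ⟨ha', hx', hf'⟩ | ⟨ha', h1', h2', hf'⟩ <;>
      rw [hf, hf'] at heq
    · omega
    · exfalso
      have e1 := h'.1
      have e2 := h'.2.1
      refine hPNcross a j h ?_
      rw [show j + 2 = j' by omega]
      exact h'
    · have := h.1; omega
    · omega
    · exfalso
      have e1 := h.1
      have e2 := h.2.1
      refine hPNcross a j' h' ?_
      rw [show j' + 2 = j by omega]
      exact h
    · have e1 := h.1
      have e1' := h'.1
      omega
    · have := h.2.1; omega
    · have := h.2.1; omega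
    · have := h'.1; omega
    · have := h'.2.1; omega
    · omega
    · omega
    · omega
    · have := h'.2.1; omega
    · omega
    · omega
  -- build the permutations
  have hσ : ∀ a : β, ∃ σ : Equiv.Perm (ZMod p),
      ∀ j ∈ domN ℓ n a₀ x₀ p a, σ (j : ZMod p) = ((fN ℓ n a₀ x₀ p a j : ℕ) : ZMod p) := by
    intro a
    have hdomlt : ∀ j ∈ domN ℓ n a₀ x₀ p a, j < p := by
      intro j hj
      rw [domN, Finset.mem_filter, Finset.mem_range] at hj
      exact hj.1
    have hinjON : Set.InjOn (fun x : ZMod p => ((fN ℓ n a₀ x₀ p a x.val : ℕ) : ZMod p))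
        ((domN ℓ n a₀ x₀ p a).image (Nat.cast : ℕ → ZMod p)) := by
      intro x hx y hy hxy
      simp only [Finset.coe_image, Set.mem_image, Finset.mem_coe] at hx hy
      obtain ⟨j, hj, rfl⟩ := hx
      obtain ⟨j', hj', rfl⟩ := hy
      simp only at hxy
      rw [ZMod.val_cast_of_lt (hdomlt j hj), ZMod.val_cast_of_lt (hdomlt j' hj')] at hxy
      have hfj := hflt a j (hdomlt j hj)
      have hfj' := hflt a j' (hdomlt j' hj')
      have heq : fN ℓ n a₀ x₀ p a j = fN ℓ n a₀ x₀ p a j' := by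
        have h2 := congrArg ZMod.val hxy
        rwa [ZMod.val_cast_of_lt hfj, ZMod.val_cast_of_lt hfj'] at h2
      rw [hNinj a j hj j' hj' heq]
    obtain ⟨σ, hs⟩ := exists_perm_extend
      ((domN ℓ n a₀ x₀ p a).image (Nat.cast : ℕ → ZMod p))
      (fun x => ((fN ℓ n a₀ x₀ p a x.val : ℕ) : ZMod p)) hinjON
    refine ⟨σ, fun j hj => ?_⟩
    have := hs (j : ZMod p) (Finset.mem_image_of_mem (Nat.cast : ℕ → ZMod p) hj)
    rw [this, ZMod.val_cast_of_lt (hdomlt j hj)]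
  choose σs hσs using hσ
  have hmemdom : ∀ a j,
      (PC ℓ n a j ∨ NC ℓ n a j ∨ (a = a₀ ∧ (j = x₀ ∨ n + 1 ≤ j ∧ j ≤ p - 2))) → j < p →
      j ∈ domN ℓ n a₀ x₀ p a := by
    intro a j h hj
    rw [domN, Finset.mem_filter, Finset.mem_range]
    exact ⟨hj, h⟩
  -- the four behaviours of the permutations
  have hfwd : ∀ a j, PC ℓ n a j → σs a (j : ZMod p) = ((j + 1 : ℕ) : ZMod p) := by
    intro a j h
    have hjp : j < p := by have := h.1; omega
    have := hσs a j (hmemdom a j (Or.inl h) hjp)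
    rwa [show fN ℓ n a₀ x₀ p a j = j + 1 from by rw [fN, if_pos h]] at this
  have hbwd : ∀ a j, NC ℓ n a j → σs a (j : ZMod p) = ((j - 1 : ℕ) : ZMod p) := by
    intro a j h
    have hjp : j < p := by have := h.2.1; omega
    have hnp : ¬ PC ℓ n a j := fun hq => hPN a j hq h
    have := hσs a j (hmemdom a j (Or.inr (Or.inl h)) hjp)
    rwa [show fN ℓ n a₀ x₀ p a j = j - 1 from by rw [fN, if_neg hnp, if_pos h]] at this
  have hbr : σs a₀ (x₀ : ZMod p) = ((n + 1 : ℕ) : ZMod p) := by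
    have := hσs a₀ x₀ (hmemdom a₀ x₀ (Or.inr (Or.inr ⟨rfl, Or.inl rfl⟩)) (by omega))
    rwa [show fN ℓ n a₀ x₀ p a₀ x₀ = n + 1 from by
      rw [fN, if_neg hx₀p, if_neg hx₀q, if_pos ⟨rfl, rfl⟩]] at this
  have hch : ∀ j, n + 1 ≤ j → j ≤ p - 2 → σs a₀ (j : ZMod p) = ((j + 1 : ℕ) : ZMod p) := by
    intro j h1 h2
    have hjp : j < p := by omega
    have hq1 : ¬ PC ℓ n a₀ j := fun hq => by have := hq.1; omega
    have hq2 : ¬ NC ℓ n a₀ j := fun hq => by have := hq.2.1; omega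
    have hq3 : ¬ (a₀ = a₀ ∧ j = x₀) := by
      rintro ⟨-, rfl⟩
      omega
    have := hσs a₀ j (hmemdom a₀ j (Or.inr (Or.inr ⟨rfl, Or.inr ⟨h1, h2⟩⟩)) hjp)
    rwa [show fN ℓ n a₀ x₀ p a₀ j = j + 1 from by
      rw [fN, if_neg hq1, if_neg hq2, if_neg hq3, if_pos ⟨rfl, h1, h2⟩]] at this
  -- evaluation of `w` at `0`
  have heval : ∀ m, m ≤ n →
      (FreeGroup.lift σs) (FreeGroup.mk (L.drop (n - m))) 0 = ((m : ℕ) : ZMod p) := by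
    intro m
    induction m with
    | zero =>
      intro _
      rw [Nat.sub_zero, hn, List.drop_length, ← FreeGroup.one_eq_mk]
      simp
    | succ m ih =>
      intro hm
      have hkn : n - (m + 1) < n := by omega
      have hkL : n - (m + 1) < L.length := by omega
      have hdrop : L.drop (n - (m + 1)) = ℓ (n - (m + 1)) :: L.drop (n - m) := by
        rw [hℓget _ hkn hkL, show n - m = (n - (m + 1)) + 1 by omega]
        exact List.drop_eq_getElem_cons hkL
      rw [hdrop, show (ℓ (n - (m + 1)) :: L.drop (n - m)) = [ℓ (n - (m + 1))] ++ L.drop (n - m)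
          from rfl,
        ← FreeGroup.mul_mk, map_mul, Equiv.Perm.mul_apply, ih (by omega)]
      have hsingle : (FreeGroup.lift σs) (FreeGroup.mk [ℓ (n - (m + 1))]) =
          cond (ℓ (n - (m + 1))).2 (σs (ℓ (n - (m + 1))).1) (σs (ℓ (n - (m + 1))).1)⁻¹ := by
        rw [FreeGroup.lift_mk]
        simp
      rw [hsingle]
      cases hb : (ℓ (n - (m + 1))).2
      · have hneg : NC ℓ n (ℓ (n - (m + 1))).1 (m + 1) := ⟨by omega, by omega, by rw [← hb]⟩
        have hstep := hbwd _ (m + 1) hneg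
        rw [show m + 1 - 1 = m from rfl] at hstep
        show (σs (ℓ (n - (m + 1))).1)⁻¹ ((m : ℕ) : ZMod p) = ((m + 1 : ℕ) : ZMod p)
        rw [Equiv.Perm.inv_eq_iff_eq]
        exact hstep.symm
      · have hpos : PC ℓ n (ℓ (n - (m + 1))).1 m :=
          ⟨by omega, by rw [show n - 1 - m = n - (m + 1) by omega, ← hb]⟩
        show (σs (ℓ (n - (m + 1))).1) ((m : ℕ) : ZMod p) = ((m + 1 : ℕ) : ZMod p)
        exact hfwd _ m hpos
  have hΦw : (FreeGroup.lift σs) w 0 = ((n : ℕ) : ZMod p) := by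
    have := heval n le_rfl
    rwa [Nat.sub_self, List.drop_zero, hLw] at this
  have hcastn : ((n : ℕ) : ZMod p) ≠ 0 := by
    intro h
    rw [ZMod.natCast_eq_zero_iff] at h
    have := Nat.le_of_dvd hn0 h
    omega
  -- every point is reachable from `0`
  have hstepf : ∀ (a : β) (x y : ZMod p), σs a x = y →
      (∃ g, (FreeGroup.lift σs) g 0 = x) → ∃ g, (FreeGroup.lift σs) g 0 = y := by
    rintro a x y hxy ⟨g, hg⟩
    exact ⟨FreeGroup.of a * g, by rw [map_mul, FreeGroup.lift_apply_of, Equiv.Perm.mul_apply, hg, hxy]⟩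
  have hstepb : ∀ (a : β) (x y : ZMod p), σs a y = x →
      (∃ g, (FreeGroup.lift σs) g 0 = x) → ∃ g, (FreeGroup.lift σs) g 0 = y := by
    rintro a x y hxy ⟨g, hg⟩
    refine ⟨(FreeGroup.of a)⁻¹ * g, ?_⟩
    rw [map_mul, map_inv, FreeGroup.lift_apply_of, Equiv.Perm.mul_apply, hg, ← hxy,
      Equiv.Perm.inv_def, Equiv.symm_apply_apply]
  have hupto : ∀ m, m ≤ n → ∃ g, (FreeGroup.lift σs) g 0 = ((m : ℕ) : ZMod p) := by
    intro m
    induction m with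
    | zero => exact fun _ => ⟨1, by simp⟩
    | succ m ih =>
      intro hm
      have hgm := ih (by omega)
      cases hb : (ℓ (n - (m + 1))).2
      · have hneg : NC ℓ n (ℓ (n - (m + 1))).1 (m + 1) := ⟨by omega, by omega, by rw [← hb]⟩
        have hstep := hbwd _ (m + 1) hneg
        rw [show m + 1 - 1 = m from rfl] at hstep
        exact hstepb _ _ _ hstep hgm
      · have hpos : PC ℓ n (ℓ (n - (m + 1))).1 m :=
          ⟨by omega, by rw [show n - 1 - m = n - (m + 1) by omega, ← hb]⟩
        exact hstepf _ _ _ (hfwd _ m hpos) hgm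
  have hhi : ∀ t, n + 1 + t ≤ p - 1 → ∃ g, (FreeGroup.lift σs) g 0 = ((n + 1 + t : ℕ) : ZMod p) := by
    intro t
    induction t with
    | zero => exact fun _ => hstepf _ _ _ hbr (hupto x₀ hx₀n)
    | succ t ih =>
      intro ht
      have hprev := ih (by omega)
      have hc := hch (n + 1 + t) (by omega) (by omega)
      have hres := hstepf _ _ _ hc hprev
      rwa [show n + 1 + t + 1 = n + 1 + (t + 1) by omega] at hres
  have hreach : ∀ x : ZMod p, ∃ g : FreeGroup β, (FreeGroup.lift σs) g 0 = x := by
    intro x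
    have hx : x = ((x.val : ℕ) : ZMod p) := (ZMod.natCast_zmod_val x).symm
    by_cases hc : x.val ≤ n
    · rw [hx]
      exact hupto x.val hc
    · have h1 : x.val < p := ZMod.val_lt x
      rw [hx]
      have := hhi (x.val - (n + 1)) (by omega)
      rwa [show n + 1 + (x.val - (n + 1)) = x.val by omega] at this
  -- conclude via the stabilizer of `0`
  letI act : MulAction (FreeGroup β) (ZMod p) := MulAction.compHom _ (FreeGroup.lift σs)
  haveI htrans : MulAction.IsPretransitive (FreeGroup β) (ZMod p) := by
    constructor
    intro x y
    obtain ⟨gx, hgx⟩ := hreach x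
    obtain ⟨gy, hgy⟩ := hreach y
    refine ⟨gy * gx⁻¹, ?_⟩
    show ((FreeGroup.lift σs) (gy * gx⁻¹)) x = y
    rw [map_mul, map_inv, Equiv.Perm.mul_apply, ← hgx, Equiv.Perm.inv_def, Equiv.symm_apply_apply]
    exact hgy
  refine ⟨MulAction.stabilizer (FreeGroup β) (0 : ZMod p), ?_, ?_⟩
  · apply isCoatom_of_index_prime hp
    rw [MulAction.index_stabilizer_of_transitive, Nat.card_zmod]
  · intro hmem
    rw [MulAction.mem_stabilizer_iff] at hmem
    have h0 : (FreeGroup.lift σs) w 0 = 0 := hmem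
    rw [hΦw] at h0
    exact hcastn h0

/-- A finitely generated residually free group has trivial Frattini subgroup. -/
theorem frattini_eq_bot_of_residually_free {G : Type*} [Group G]
    (hfg : Group.FG G)
    (hres : ∀ g : G, g ≠ 1 → ∃ (α : Type) (φ : G →* FreeGroup α), φ g ≠ 1) :
    frattini G = ⊥ := by
  rw [eq_bot_iff]
  intro g hg
  rw [Subgroup.mem_bot]
  by_contra hne
  obtain ⟨α, φ, hφ⟩ := hres g hne
  let ψ : G →* FreeGroup (IsFreeGroup.Generators φ.range) :=
    (IsFreeGroup.toFreeGroup φ.range).toMonoidHom.comp φ.rangeRestrict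
  have hψs : Function.Surjective ψ :=
    (IsFreeGroup.toFreeGroup φ.range).surjective.comp φ.rangeRestrict_surjective
  have hψg : ψ g ≠ 1 := by
    intro h
    apply hφ
    have h1 : φ.rangeRestrict g = 1 := by
      apply (IsFreeGroup.toFreeGroup φ.range).injective
      rw [map_one]
      exact h
    have h2 := congrArg Subtype.val h1
    simpa using h2
  obtain ⟨K, hK, hgK⟩ := exists_coatom_not_mem (ψ g) hψg
  have hle : frattini G ≤ K.comap ψ :=
    frattini_le_coatom (Subgroup.isCoatom_comap_of_surjective hψs hK)
  exact hgK (hle hg)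
end

section
/- Lemma 2.1: Let H be a virtually cyclic group, i.e., a group containing a cyclic subgroup of finite index. Then the Frattini subgroup F(H) of H is finite. -/
/-- Lemma 2.1: a virtually cyclic group has finite Frattini subgroup. -/
theorem frattini_finite_of_virtually_cyclic {H : Type*} [Group H]
    (h : ∃ K : Subgroup H, IsCyclic K ∧ K.FiniteIndex) :
    (frattini H : Set H).Finite := by
  classical
  obtain ⟨K, hKcyc, hKfi⟩ := h
  haveI := hKfi
  set N := K.normalCore with hNdef
  haveI : N.FiniteIndex := K.finiteIndex_normalCore
  haveI : N.Normal := K.normalCore_normal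
  haveI : IsCyclic N := by
    haveI := hKcyc
    exact Subgroup.isCyclic_of_le K.normalCore_le
  obtain ⟨g, hg⟩ := (inferInstance : IsCyclic N).exists_generator
  set a : H := (g : H) with ha
  have haN : a ∈ N := g.2
  have hNa : N = Subgroup.zpowers a := by
    apply le_antisymm
    · intro y hy
      obtain ⟨k, hk⟩ := hg ⟨y, hy⟩
      exact Subgroup.mem_zpowers_iff.2 ⟨k, by simpa using congrArg Subtype.val hk⟩
    · exact Subgroup.zpowers_le.2 haN
  by_cases hord : IsOfFinOrder a
  · -- `N` is finite, hence `H` is finite.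
    haveI hNfin : Finite N := by
      have : ((Subgroup.zpowers a : Subgroup H) : Set H).Finite := hord.finite_zpowers
      rw [← hNa] at this
      exact this.to_subtype
    haveI : Finite H := Nat.finite_of_card_ne_zero <| by
      rw [← N.card_mul_index]
      exact mul_ne_zero Nat.card_pos.ne' Subgroup.FiniteIndex.index_ne_zero
    exact Set.toFinite _
  · have hinj : Function.Injective fun n : ℤ => a ^ n :=
      injective_zpow_iff_not_isOfFinOrder.2 hord
    have hkey : ∀ x ∈ frattini H, x ∈ N → x = 1 := by
      intro x hxF hxN
      obtain ⟨k, hk⟩ := Subgroup.mem_zpowers_iff.1 (hNa.le hxN)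
      rw [← hk]
      suffices hk0 : k = 0 by rw [hk0, zpow_zero]
      by_contra hk0
      obtain ⟨p, hple, hp⟩ := Nat.exists_infinite_primes (max k.natAbs N.index + 1)
      have hkabs : k.natAbs ≠ 0 := Int.natAbs_ne_zero.2 hk0
      have hpk : ¬ (p : ℤ) ∣ k := by
        intro hdvd
        have hdvd' : p ∣ k.natAbs := by
          simpa using Int.natAbs_dvd_natAbs.2 hdvd
        exact absurd (Nat.le_of_dvd (Nat.pos_of_ne_zero hkabs) hdvd') (by omega)
      have hpi : ¬ p ∣ N.index := fun hd =>
        absurd (Nat.le_of_dvd (Nat.pos_of_ne_zero Subgroup.FiniteIndex.index_ne_zero) hd)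
          (by omega)
      haveI hfp : Fact p.Prime := ⟨hp⟩
      set P := Subgroup.zpowers (a ^ p) with hPdef
      have hpow : ∀ m : ℤ, (a ^ p) ^ m = a ^ ((p : ℤ) * m) := fun m => by
        rw [← zpow_natCast a p, ← zpow_mul]
      have haP : ∀ {j : ℤ}, a ^ j ∈ P ↔ (p : ℤ) ∣ j := by
        intro j
        constructor
        · rintro ⟨m, hm⟩
          simp only [hpow] at hm
          exact ⟨m, (hinj hm).symm⟩
        · rintro ⟨m, rfl⟩
          exact ⟨m, by simp only [hpow]⟩
      have hPN : P ≤ N := by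
        rw [hNa]
        exact Subgroup.zpowers_le.2 (pow_mem (Subgroup.mem_zpowers a) p)
      haveI hPnormal : P.Normal := by
        constructor
        intro n hn c
        obtain ⟨m, hm⟩ := hn
        simp only [hpow] at hm
        have hca : c * a * c⁻¹ ∈ N := (inferInstance : N.Normal).conj_mem a haN c
        rw [hNa, Subgroup.mem_zpowers_iff] at hca
        obtain ⟨j, hj⟩ := hca
        have hcn : c * n * c⁻¹ = a ^ (j * ((p : ℤ) * m)) := by
          calc c * n * c⁻¹ = c * a ^ ((p : ℤ) * m) * c⁻¹ := by rw [hm]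
            _ = (c * a * c⁻¹) ^ ((p : ℤ) * m) := by rw [conj_zpow]
            _ = (a ^ j) ^ ((p : ℤ) * m) := by rw [hj]
            _ = a ^ (j * ((p : ℤ) * m)) := by rw [← zpow_mul]
        rw [hcn]
        exact haP.2 ⟨j * m, by ring⟩
      set π := QuotientGroup.mk' P with hπ
      have hπs : Function.Surjective π := QuotientGroup.mk'_surjective P
      set Nb := N.map π with hNb
      haveI : Nb.Normal := Subgroup.Normal.map (inferInstance : N.Normal) π hπs
      have hNbz : Nb = Subgroup.zpowers (π a) := by
        rw [hNb, hNa]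
        exact π.map_zpowers a
      have hπap : π (a ^ p) = 1 := (QuotientGroup.eq_one_iff _).2 ⟨1, by simp⟩
      have hordπa : orderOf (π a) = p := by
        apply orderOf_eq_prime
        · rw [← map_pow]; exact hπap
        · intro h1
          have hA : a ^ (1 : ℤ) ∈ P := by
            simpa using (QuotientGroup.eq_one_iff a).1 h1
          have hd1 : (p : ℤ) ∣ 1 := haP.1 hA
          have : p ∣ 1 := by exact_mod_cast hd1
          exact hp.ne_one (Nat.dvd_one.1 this)
      have hcard : Nat.card Nb = p := by rw [hNbz, Nat.card_zpowers, hordπa]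
      have hindex : Nb.index = N.index := by
        rw [hNb, Subgroup.index_map, hπ, QuotientGroup.ker_mk', sup_of_le_left hPN,
          MonoidHom.range_eq_top.2 hπs, Subgroup.index_top, mul_one]
      have hcop : Nat.Coprime (Nat.card Nb) Nb.index := by
        rw [hcard, hindex]
        exact (Nat.Prime.coprime_iff_not_dvd hp).2 hpi
      obtain ⟨C, hC⟩ := Subgroup.exists_right_complement'_of_coprime hcop
      have hCindex : C.index = p := by rw [hC.index_eq_card, hcard]
      have hCcoatom : IsCoatom C := by
        constructor
        · intro hCtop
          rw [hCtop, Subgroup.index_top] at hCindex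
          exact hp.one_lt.ne' hCindex.symm
        · intro M hM
          have hmul := Subgroup.relIndex_mul_index hM.le
          rw [hCindex] at hmul
          rcases hp.eq_one_or_self_of_dvd (C.relIndex M) ⟨M.index, hmul.symm⟩ with h1 | h1
          · exact absurd (Subgroup.relIndex_eq_one.1 h1) hM.2
          · rw [h1] at hmul
            have : M.index = 1 := by
              have := Nat.eq_of_mul_eq_mul_left hp.pos (hmul.trans (mul_one p).symm)
              exact this
            exact Subgroup.index_eq_one.1 this
      have hxC : x ∈ C.comap π :=
        frattini_le_coatom (Subgroup.isCoatom_comap_of_surjective hπs hCcoatom) hxF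
      have hxNb : π x ∈ Nb := ⟨x, hxN, rfl⟩
      have hmem : π x ∈ Nb ⊓ C := ⟨hxNb, hxC⟩
      have hx1 : π x = 1 := Subgroup.mem_bot.1 (hC.disjoint.le_bot hmem)
      have hxP : x ∈ P := (QuotientGroup.eq_one_iff x).1 hx1
      rw [← hk] at hxP
      exact hpk (haP.1 hxP)
    haveI : Finite (H ⧸ N) :=
      Nat.finite_of_card_ne_zero Subgroup.FiniteIndex.index_ne_zero
    have hinjOn : Set.InjOn (QuotientGroup.mk : H → H ⧸ N) (frattini H) := by
      intro x hx y hy hxy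
      have hmem : x⁻¹ * y ∈ N := (QuotientGroup.eq).1 hxy
      have := hkey (x⁻¹ * y) (mul_mem (inv_mem hx) hy) hmem
      exact inv_mul_eq_one.1 this
    exact Set.Finite.of_finite_image (Set.toFinite _) hinjOn
end

section
/- Proposition 2.4: Let G be a word-hyperbolic group with finite generating set S witnessing hyperbolicity, let g ∈ G be an element of infinite order, and suppose c ∈ G satisfies c ∉ E(g). Then there exists a constant K > 0 such that for all integers m, n one has |gⁿ c g^m|_S ≥ |gⁿ|_S + |g^m|_S − K. -/
/-- The word length of `g` with respect to a generating set `S`: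
the least `n` such that `g` is a product of `n` elements of `S ∪ S⁻¹`. -/
noncomputable def wordLength {G : Type*} [Group G] (S : Set G) (g : G) : ℕ :=
  sInf {n : ℕ | ∃ l : List G, l.length = n ∧ (∀ x ∈ l, x ∈ S ∨ x⁻¹ ∈ S) ∧ l.prod = g}

/-- The word metric on `G` with respect to a generating set `S`. -/
noncomputable def wordDist {G : Type*} [Group G] (S : Set G) (g h : G) : ℕ :=
  wordLength S (g⁻¹ * h)

/-- The word metric on `G` w.r.t. `S` satisfies the Gromov
four-point condition with constant `δ`. -/
def GromovFourPoint {G : Type*} [Group G] (S : Set G) (δ : ℝ) : Prop :=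
  ∀ x y z w : G,
    (wordDist S x y : ℝ) + (wordDist S z w : ℝ) ≤
      max ((wordDist S x z : ℝ) + (wordDist S y w : ℝ))
          ((wordDist S x w : ℝ) + (wordDist S y z : ℝ)) + 2 * δ

/-- A group is word-hyperbolic if it has a finite generating set whose
word metric satisfies the Gromov four-point condition for some `δ ≥ 0`. -/
def IsWordHyperbolic (G : Type*) [Group G] : Prop :=
  ∃ S : Finset G, Subgroup.closure (S : Set G) = ⊤ ∧
    ∃ δ : ℝ, 0 ≤ δ ∧ GromovFourPoint (S : Set G) δ

/-- For `g` of infinite order, `Esub g` is the set of `h` such that `h⁻¹ gⁿ h = g^{±n}`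
for some `n ≠ 0`. -/
def Esub {G : Type*} [Group G] (g : G) : Set G :=
  {h : G | ∃ n : ℤ, n ≠ 0 ∧ (h⁻¹ * g ^ n * h = g ^ n ∨ h⁻¹ * g ^ n * h = g ^ (-n))}

open Pointwise

namespace P24

variable {G : Type*} [Group G]

section Basics

variable (S : Finset G)

/-- shorthand -/
noncomputable abbrev Wl (x : G) : ℕ := wordLength (S : Set G) x

lemma wl_le_length (l : List G) (hl : ∀ a ∈ l, a ∈ (S : Set G) ∨ a⁻¹ ∈ (S : Set G)) :
    Wl S l.prod ≤ l.length :=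
  Nat.sInf_le ⟨l, rfl, hl, rfl⟩

variable {S}

lemma exists_rep (hgen : Subgroup.closure (S : Set G) = ⊤) (x : G) :
    ∃ l : List G, (∀ a ∈ l, a ∈ (S : Set G) ∨ a⁻¹ ∈ (S : Set G)) ∧ l.prod = x := by
  have hx : x ∈ Subgroup.closure (S : Set G) := by rw [hgen]; trivial
  induction hx using Subgroup.closure_induction with
  | mem y hy => exact ⟨[y], by simpa using Or.inl hy, by simp⟩
  | one => exact ⟨[], by simp, by simp⟩
  | mul y z _ _ hy hz =>
      obtain ⟨ly, hly, hpy⟩ := hy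
      obtain ⟨lz, hlz, hpz⟩ := hz
      refine ⟨ly ++ lz, ?_, by simp [hpy, hpz]⟩
      intro a ha
      rcases List.mem_append.1 ha with h | h
      · exact hly a h
      · exact hlz a h
  | inv y _ hy =>
      obtain ⟨ly, hly, hpy⟩ := hy
      refine ⟨(ly.map (·⁻¹)).reverse, ?_, ?_⟩
      · intro a ha
        simp only [List.mem_reverse, List.mem_map] at ha
        obtain ⟨b, hb, rfl⟩ := ha
        rcases hly b hb with h | h
        · exact Or.inr (by simpa using h)
        · exact Or.inl h
      · rw [← hpy, List.prod_inv_reverse]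

lemma wl_spec (hgen : Subgroup.closure (S : Set G) = ⊤) (x : G) :
    ∃ l : List G, l.length = Wl S x ∧ (∀ a ∈ l, a ∈ (S : Set G) ∨ a⁻¹ ∈ (S : Set G)) ∧
      l.prod = x := by
  obtain ⟨l, hl, hp⟩ := exists_rep hgen x
  have hne : {n : ℕ | ∃ l : List G, l.length = n ∧
      (∀ a ∈ l, a ∈ (S : Set G) ∨ a⁻¹ ∈ (S : Set G)) ∧ l.prod = x}.Nonempty :=
    ⟨l.length, l, rfl, hl, hp⟩
  have := Nat.sInf_mem hne
  obtain ⟨l', h1, h2, h3⟩ := this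
  exact ⟨l', h1, h2, h3⟩

lemma wl_one : Wl S (1 : G) = 0 :=
  Nat.eq_zero_of_le_zero (by simpa using wl_le_length S ([] : List G) (by simp))

lemma wl_mul_le (hgen : Subgroup.closure (S : Set G) = ⊤) (x y : G) :
    Wl S (x * y) ≤ Wl S x + Wl S y := by
  obtain ⟨lx, h1x, h2x, h3x⟩ := wl_spec hgen x
  obtain ⟨ly, h1y, h2y, h3y⟩ := wl_spec hgen y
  have : Wl S (x * y) ≤ (lx ++ ly).length := by
    have := wl_le_length S (lx ++ ly) (by
      intro a ha
      rcases List.mem_append.1 ha with h | h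
      · exact h2x a h
      · exact h2y a h)
    simpa [h3x, h3y] using this
  simpa [h1x, h1y] using this

lemma wl_inv (hgen : Subgroup.closure (S : Set G) = ⊤) (x : G) : Wl S x⁻¹ = Wl S x := by
  have key : ∀ y : G, Wl S y⁻¹ ≤ Wl S y := by
    intro y
    obtain ⟨l, h1, h2, h3⟩ := wl_spec hgen y
    have := wl_le_length S ((l.map (·⁻¹)).reverse) (by
      intro a ha
      simp only [List.mem_reverse, List.mem_map] at ha
      obtain ⟨b, hb, rfl⟩ := ha
      rcases h2 b hb with h | h
      · exact Or.inr (by simpa using h)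
      · exact Or.inl h)
    rw [← List.prod_inv_reverse, h3] at this
    simpa [h1] using this
  have h1 := key x
  have h2 := key x⁻¹
  rw [inv_inv] at h2
  omega

lemma wl_eq_zero (hgen : Subgroup.closure (S : Set G) = ⊤) {x : G} (h : Wl S x = 0) :
    x = 1 := by
  obtain ⟨l, h1, h2, h3⟩ := wl_spec hgen x
  rw [h] at h1
  rw [← h3, List.length_eq_zero_iff.1 h1, List.prod_nil]

/-- triangle inequality in metric form -/
lemma wl_tri (hgen : Subgroup.closure (S : Set G) = ⊤) (x y z : G) :
    Wl S (x⁻¹ * z) ≤ Wl S (x⁻¹ * y) + Wl S (y⁻¹ * z) := by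
  have := wl_mul_le hgen (x⁻¹ * y) (y⁻¹ * z)
  simpa [mul_assoc] using this

lemma ball_finite (hgen : Subgroup.closure (S : Set G) = ⊤) (r : ℕ) :
    {x : G | Wl S x ≤ r}.Finite := by
  classical
  induction r with
  | zero =>
      refine Set.Finite.subset (Set.finite_singleton (1 : G)) ?_
      intro x hx
      simp only [Set.mem_setOf_eq, Nat.le_zero] at hx
      simp [wl_eq_zero hgen hx]
  | succ r ih =>
      have hT : ({x : G | Wl S x ≤ r} * ((S : Set G) ∪ (S : Set G)⁻¹ ∪ {1})).Finite := by
        refine Set.Finite.mul ih ?_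
        exact (S.finite_toSet.union S.finite_toSet.inv).union (Set.finite_singleton 1)
      refine hT.subset ?_
      intro x hx
      simp only [Set.mem_setOf_eq] at hx
      obtain ⟨l, h1, h2, h3⟩ := wl_spec hgen x
      rcases List.eq_nil_or_concat l with rfl | ⟨l', a, rfl⟩
      · exact ⟨1, by simp [wl_one], 1, by simp, by simp [← h3]⟩
      · refine ⟨l'.prod, ?_, a, ?_, by simp [← h3]⟩
        · have hlen : l'.length + 1 = Wl S x := by simpa using h1
          have := wl_le_length S l' (fun b hb => h2 b (by simp [hb]))
          simp only [Set.mem_setOf_eq]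
          omega
        · have := h2 a (by simp)
          rcases this with h | h
          · exact Or.inl (Or.inl h)
          · exact Or.inl (Or.inr (by simpa using h))

open Classical in
noncomputable def ballFS (hgen : Subgroup.closure (S : Set G) = ⊤) (r : ℕ) : Finset G :=
  (ball_finite hgen r).toFinset

lemma mem_ballFS (hgen : Subgroup.closure (S : Set G) = ⊤) {r : ℕ} {x : G} :
    x ∈ ballFS (S := S) hgen r ↔ Wl S x ≤ r := by
  simp [ballFS]

lemma pow_ne_pow (hg : ¬IsOfFinOrder (g : G)) {a b : ℕ} (hab : a ≠ b) : g ^ a ≠ g ^ b := by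
  intro h
  rcases Nat.lt_or_ge a b with hlt | hge
  · exact hg (isOfFinOrder_iff_pow_eq_one.2 ⟨b - a, by omega, by
      have : g ^ a * g ^ (b - a) = g ^ b := by rw [← pow_add]; congr 1; omega
      rw [← h] at this
      exact mul_eq_left.1 this⟩)
  · have hlt : b < a := by omega
    exact hg (isOfFinOrder_iff_pow_eq_one.2 ⟨a - b, by omega, by
      have : g ^ b * g ^ (a - b) = g ^ a := by rw [← pow_add]; congr 1; omega
      rw [h] at this
      exact mul_eq_left.1 this⟩)

lemma exists_big_power (hgen : Subgroup.closure (S : Set G) = ⊤) {g : G}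
    (hg : ¬IsOfFinOrder g) (M : ℕ) : ∃ n : ℕ, 1 ≤ n ∧ M < Wl S (g ^ n) := by
  classical
  by_contra hcon
  push_neg at hcon
  have hmap : ∀ n ∈ Finset.Icc 1 ((ballFS (S := S) hgen M).card + 1),
      g ^ n ∈ ballFS (S := S) hgen M := by
    intro n hn
    simp only [Finset.mem_Icc] at hn
    exact (mem_ballFS hgen).2 (hcon n hn.1)
  have hcard : (ballFS (S := S) hgen M).card < (Finset.Icc 1 ((ballFS (S := S) hgen M).card + 1)).card := by
    simp [Nat.card_Icc]
  obtain ⟨a, ha, b, hb, hab, heq⟩ :=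
    Finset.exists_ne_map_eq_of_card_lt_of_maps_to hcard hmap
  exact pow_ne_pow hg hab heq

/-- symmetry of the word metric -/
lemma wl_symm (hgen : Subgroup.closure (S : Set G) = ⊤) (x y : G) :
    Wl S (x⁻¹ * y) = Wl S (y⁻¹ * x) := by
  have := wl_inv hgen (y⁻¹ * x)
  simpa [mul_inv_rev] using this

end Basics

section Geom

variable (S : Finset G)

/-- twice the Gromov product of `y,z` at basepoint `x` -/
noncomputable def gp (x y z : G) : ℤ :=
  (Wl S (x⁻¹ * y) : ℤ) + (Wl S (x⁻¹ * z) : ℤ) - (Wl S (y⁻¹ * z) : ℤ)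

/-- a discrete geodesic chain from `b`, of length `ℓ` -/
def IsChain (b : G) (f : ℕ → G) (ℓ : ℕ) : Prop :=
  f 0 = b ∧ ∀ i j, i ≤ j → j ≤ ℓ → Wl S ((f i)⁻¹ * f j) = j - i

variable {S}

lemma gp_le_left (hgen : Subgroup.closure (S : Set G) = ⊤) (x y z : G) :
    gp S x y z ≤ 2 * (Wl S (x⁻¹ * y) : ℤ) := by
  have h1 := wl_tri hgen x y z
  have h2 := wl_symm hgen y x
  unfold gp
  omega

lemma gp_le_right (hgen : Subgroup.closure (S : Set G) = ⊤) (x y z : G) :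
    gp S x y z ≤ 2 * (Wl S (x⁻¹ * z) : ℤ) := by
  have h1 := wl_tri hgen x z y
  have h2 := wl_symm hgen z y
  have h3 := wl_symm hgen z x
  unfold gp
  omega

lemma gp_hyp (hgen : Subgroup.closure (S : Set G) = ⊤) {D : ℕ}
    (h4 : ∀ x y z w : G, Wl S (x⁻¹ * y) + Wl S (z⁻¹ * w) ≤
      max (Wl S (x⁻¹ * z) + Wl S (y⁻¹ * w)) (Wl S (x⁻¹ * w) + Wl S (y⁻¹ * z)) + D)
    (x y z w : G) :
    min (gp S x y w) (gp S x w z) - D ≤ gp S x y z := by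
  have key := h4 x w y z
  have s1 := wl_symm hgen w y
  have s2 := wl_symm hgen w z
  have s3 := wl_symm hgen y z
  rcases le_total (gp S x y w) (gp S x w z) with hm | hm
  · rw [min_eq_left hm]
    unfold gp at hm ⊢
    rcases max_cases (Wl S (x⁻¹ * y) + Wl S (w⁻¹ * z)) (Wl S (x⁻¹ * z) + Wl S (w⁻¹ * y)) with
      ⟨he, _⟩ | ⟨he, _⟩ <;> rw [he] at key <;> omega
  · rw [min_eq_right hm]
    unfold gp at hm ⊢
    rcases max_cases (Wl S (x⁻¹ * y) + Wl S (w⁻¹ * z)) (Wl S (x⁻¹ * z) + Wl S (w⁻¹ * y)) with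
      ⟨he, _⟩ | ⟨he, _⟩ <;> rw [he] at key <;> omega

lemma IsChain.eval {S : Finset G} {b : G} {f : ℕ → G} {ℓ : ℕ}
    (h : IsChain S b f ℓ) {t : ℕ} (ht : t ≤ ℓ) :
    Wl S (b⁻¹ * f t) = t := by
  have := h.2 0 t (by omega) ht
  rw [h.1] at this
  simpa using this

lemma chain_exists (hgen : Subgroup.closure (S : Set G) = ⊤) (x : G) :
    ∃ f : ℕ → G, IsChain S 1 f (Wl S x) ∧ f (Wl S x) = x := by
  obtain ⟨l, h1, h2, h3⟩ := wl_spec hgen x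
  refine ⟨fun t => (l.take t).prod, ⟨by simp, ?_⟩, ?_⟩
  swap
  · show (l.take (Wl S x)).prod = x
    rw [List.take_of_length_le (by omega), h3]
  intro i j hij hj
  show Wl S (((l.take i).prod)⁻¹ * (l.take j).prod) = j - i
  have seg : ((l.take i).prod)⁻¹ * (l.take j).prod = ((l.drop i).take (j - i)).prod := by
    have hsp : l.take j = l.take i ++ (l.drop i).take (j - i) := by
      rw [← List.take_add]
      congr 1
      omega
    rw [hsp, List.prod_append]
    group
  have hupper : ∀ a c : ℕ, a ≤ c → Wl S (((l.drop a).take (c - a)).prod) ≤ c - a := by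
    intro a c hac
    have := wl_le_length S ((l.drop a).take (c - a)) (by
      intro b hb
      exact h2 b (List.drop_subset a l (List.take_subset _ _ hb)))
    calc Wl S (((l.drop a).take (c - a)).prod) ≤ ((l.drop a).take (c - a)).length := this
      _ ≤ c - a := by simp
  rw [seg]
  refine le_antisymm (hupper i j hij) ?_
  have e1 : Wl S x ≤ Wl S ((l.take i).prod) + Wl S (((l.drop i).take (j - i)).prod)
      + Wl S ((l.drop j).prod) := by
    have hx : x = (l.take i).prod * (((l.drop i).take (j - i)).prod * (l.drop j).prod) := by
      rw [← h3, ← List.prod_append, ← List.prod_append]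
      congr 1
      have h'' : l.drop j = (l.drop i).drop (j - i) := by
        rw [List.drop_drop]
        congr 1
        omega
      rw [h'', List.take_append_drop, List.take_append_drop]
    calc Wl S x = Wl S ((l.take i).prod * (((l.drop i).take (j - i)).prod * (l.drop j).prod)) := by
          rw [← hx]
      _ ≤ _ := le_trans (wl_mul_le hgen _ _)
          (by
            have := wl_mul_le hgen (((l.drop i).take (j - i)).prod) ((l.drop j).prod)
            omega)
  have e2 : Wl S ((l.take i).prod) ≤ i := by
    have := hupper 0 i (by omega)
    simpa using this
  have e3 : Wl S ((l.drop j).prod) ≤ l.length - j := by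
    have h4' := wl_le_length S (l.drop j) (fun b hb => h2 b (List.drop_subset j l hb))
    calc Wl S ((l.drop j).prod) ≤ (l.drop j).length := h4'
      _ = l.length - j := by simp
  have hxl : Wl S x = l.length := h1.symm
  have hjl : j ≤ l.length := by omega
  omega

lemma chain_translate {S : Finset G} {b : G} {f : ℕ → G} {ℓ : ℕ} (a : G)
    (h : IsChain S b f ℓ) :
    IsChain S (a * b) (fun t => a * f t) ℓ := by
  refine ⟨by simp [h.1], ?_⟩
  intro i j hij hj
  have := h.2 i j hij hj
  simpa [mul_assoc] using this

lemma chain_reverse (hgen : Subgroup.closure (S : Set G) = ⊤) {b : G} {f : ℕ → G} {ℓ : ℕ}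
    (h : IsChain S b f ℓ) :
    IsChain S (f ℓ) (fun t => f (ℓ - t)) ℓ := by
  refine ⟨by simp, ?_⟩
  intro i j hij hj
  show Wl S ((f (ℓ - i))⁻¹ * f (ℓ - j)) = j - i
  rw [wl_symm hgen, h.2 (ℓ - j) (ℓ - i) (by omega) (by omega)]
  omega

/-- Fellow-traveling of geodesic chains from a common basepoint (Lemma A). -/
lemma chains_close (hgen : Subgroup.closure (S : Set G) = ⊤) {D : ℕ}
    (h4 : ∀ x y z w : G, Wl S (x⁻¹ * y) + Wl S (z⁻¹ * w) ≤
      max (Wl S (x⁻¹ * z) + Wl S (y⁻¹ * w)) (Wl S (x⁻¹ * w) + Wl S (y⁻¹ * z)) + D)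
    {b : G} {fA fB : ℕ → G} {ℓA ℓB : ℕ}
    (hA : IsChain S b fA ℓA) (hB : IsChain S b fB ℓB) {t : ℕ}
    (ht : 2 * (t : ℤ) ≤ gp S b (fA ℓA) (fB ℓB)) :
    Wl S ((fA t)⁻¹ * fB t) ≤ 2 * D := by
  have htA : t ≤ ℓA := by
    have h1 := gp_le_left hgen b (fA ℓA) (fB ℓB)
    have h2 := hA.eval (le_refl ℓA)
    omega
  have htB : t ≤ ℓB := by
    have h1 := gp_le_right hgen b (fA ℓA) (fB ℓB)
    have h2 := hB.eval (le_refl ℓB)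
    omega
  have g1 : gp S b (fA t) (fA ℓA) = 2 * t := by
    unfold gp
    rw [hA.eval htA, hA.eval (le_refl ℓA), hA.2 t ℓA htA (le_refl ℓA)]
    push_cast [Nat.cast_sub htA]
    ring
  have g2 : gp S b (fB ℓB) (fB t) = 2 * t := by
    unfold gp
    rw [hB.eval htB, hB.eval (le_refl ℓB), wl_symm hgen (fB ℓB) (fB t),
      hB.2 t ℓB htB (le_refl ℓB)]
    push_cast [Nat.cast_sub htB]
    ring
  have s1 := gp_hyp hgen h4 b (fA t) (fB ℓB) (fA ℓA)
  have s2 := gp_hyp hgen h4 b (fA t) (fB t) (fB ℓB)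
  rw [g1, min_eq_left ht] at s1
  have hmin : 2 * (t : ℤ) - D ≤ min (gp S b (fA t) (fB ℓB)) (gp S b (fB ℓB) (fB t)) := by
    refine le_min (by omega) (by rw [g2]; omega)
  have key : 2 * (t : ℤ) - 2 * D ≤ gp S b (fA t) (fB t) := by omega
  have expand : gp S b (fA t) (fB t) =
      (t : ℤ) + t - Wl S ((fA t)⁻¹ * fB t) := by
    unfold gp
    rw [hA.eval htA, hB.eval htB]
  omega

/-- Corridor lemma: along a geodesic chain to `A`, middle points are moved a bounded
amount by an element `w` which moves both endpoints boundedly. -/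
lemma corridor (hgen : Subgroup.closure (S : Set G) = ⊤) {D : ℕ}
    (h4 : ∀ x y z w : G, Wl S (x⁻¹ * y) + Wl S (z⁻¹ * w) ≤
      max (Wl S (x⁻¹ * z) + Wl S (y⁻¹ * w)) (Wl S (x⁻¹ * w) + Wl S (y⁻¹ * z)) + D)
    {f : ℕ → G} {ℓ : ℕ} {A w : G}
    (hf : IsChain S 1 f ℓ) (hend : f ℓ = A) {t : ℕ}
    (h1 : 2 * Wl S w ≤ t) (h2 : t + Wl S (A⁻¹ * (w * A)) ≤ ℓ) :
    ∃ t', t' ≤ ℓ ∧ t ≤ t' + Wl S w ∧ t' ≤ t + Wl S w ∧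
      Wl S ((f t)⁻¹ * (w * f t')) ≤ 4 * D := by
  have dA : Wl S A = ℓ := by
    have := hf.eval (le_refl ℓ)
    rw [hend] at this
    simpa using this
  set dd := Wl S (A⁻¹ * (w * A)) with hdd
  obtain ⟨v, hv, hvend⟩ := chain_exists hgen (w * A)
  set ℓv := Wl S (w * A) with hlv
  -- length comparisons
  have hwA1 : ℓv ≤ ℓ + Wl S w := by
    have := wl_mul_le hgen w A
    omega
  have hwA2 : ℓ ≤ ℓv + Wl S w := by
    have h' : Wl S A ≤ Wl S (w⁻¹ * (w * A)) := by
      simp [← mul_assoc]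
    have := wl_mul_le hgen w⁻¹ (w * A)
    rw [wl_inv hgen] at this
    omega
  have hwA3 : ℓ ≤ ℓv + dd := by
    have h' := wl_mul_le hgen (w * A) ((w*A)⁻¹ * A)
    have e : (w * A) * ((w*A)⁻¹ * A) = A := by group
    rw [e] at h'
    have e2 : Wl S ((w*A)⁻¹ * A) = dd := by
      rw [wl_symm hgen]
    omega
  -- Step 1 : fellow traveling of [1,A] and [1,wA] up to time t
  have step1 : Wl S ((f t)⁻¹ * v t) ≤ 2 * D := by
    refine chains_close hgen h4 hf hv ?_
    rw [hend, hvend]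
    have expand : gp S 1 A (w * A) = (ℓ : ℤ) + ℓv - dd := by
      unfold gp
      rw [hdd, hlv]
      simp [dA]
    rw [expand]
    omega
  -- Step 2 : fellow traveling from the far endpoint
  have htlv : t ≤ ℓv := by omega
  set σ := ℓv - t with hσ
  have hα : IsChain S (w * A) (fun s => v (ℓv - s)) ℓv := by
    have := chain_reverse hgen hv
    rwa [hvend] at this
  have hβpre : IsChain S w (fun s => w * f s) ℓ := by
    have := chain_translate w hf
    rwa [mul_one] at this
  have hβ : IsChain S (w * A) (fun s => w * f (ℓ - s)) ℓ := by
    have := chain_reverse hgen hβpre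
    rwa [hend] at this
  have step2 : Wl S ((v (ℓv - σ))⁻¹ * (w * f (ℓ - σ))) ≤ 2 * D := by
    refine chains_close hgen h4 hα hβ ?_
    have e1 : v (ℓv - ℓv) = 1 := by
      simpa using hv.1
    have e2 : w * f (ℓ - ℓ) = w := by
      rw [Nat.sub_self, hf.1, mul_one]
    rw [e1, e2]
    have expand : gp S (w * A) 1 w = (ℓv : ℤ) + ℓ - Wl S w := by
      unfold gp
      have c1 : Wl S ((w * A)⁻¹ * 1) = ℓv := by
        rw [mul_one, wl_inv hgen]
      have c2 : Wl S ((w * A)⁻¹ * w) = ℓ := by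
        have e : (w * A)⁻¹ * w = A⁻¹ := by group
        rw [e, wl_inv hgen, dA]
      have c3 : Wl S ((1 : G)⁻¹ * w) = Wl S w := by simp
      rw [c1, c2, c3]
    rw [expand]
    omega
  have hvσ : v (ℓv - σ) = v t := by
    congr 1
    omega
  rw [hvσ] at step2
  refine ⟨ℓ - σ, by omega, by omega, by omega, ?_⟩
  calc Wl S ((f t)⁻¹ * (w * f (ℓ - σ))) ≤
      Wl S ((f t)⁻¹ * v t) + Wl S ((v t)⁻¹ * (w * f (ℓ - σ))) := wl_tri hgen _ _ _
    _ ≤ 4 * D := by omega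

/-- Conjugation form of the corridor lemma. -/
lemma corridor_conj (hgen : Subgroup.closure (S : Set G) = ⊤) {D : ℕ}
    (h4 : ∀ x y z w : G, Wl S (x⁻¹ * y) + Wl S (z⁻¹ * w) ≤
      max (Wl S (x⁻¹ * z) + Wl S (y⁻¹ * w)) (Wl S (x⁻¹ * w) + Wl S (y⁻¹ * z)) + D)
    {f : ℕ → G} {ℓ : ℕ} {A w : G}
    (hf : IsChain S 1 f ℓ) (hend : f ℓ = A) {t : ℕ}
    (h1 : 2 * Wl S w ≤ t) (h2 : t + Wl S (A⁻¹ * (w * A)) ≤ ℓ) :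
    Wl S ((f t)⁻¹ * (w * f t)) ≤ 4 * D + Wl S w := by
  obtain ⟨t', ht'ℓ, hb1, hb2, hm⟩ := corridor hgen h4 hf hend h1 h2
  have htℓ : t ≤ ℓ := by omega
  have hdist : Wl S ((f t')⁻¹ * f t) ≤ Wl S w := by
    rcases le_total t' t with h | h
    · have := hf.2 t' t h htℓ
      omega
    · have := hf.2 t t' h ht'ℓ
      rw [wl_symm hgen] at this
      omega
  calc Wl S ((f t)⁻¹ * (w * f t)) ≤
      Wl S ((f t)⁻¹ * (w * f t')) + Wl S ((w * f t')⁻¹ * (w * f t)) := wl_tri hgen _ _ _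
    _ ≤ 4 * D + Wl S w := by
        have e : (w * f t')⁻¹ * (w * f t) = (f t')⁻¹ * f t := by group
        rw [e]
        omega

end Geom

section Cone

variable (S : Finset G)

/-- `z` extends `x` geodesically. -/
def Cone (x z : G) : Prop := Wl S (x * z) = Wl S x + Wl S z

variable {S}

lemma cone_one (x : G) : Cone S x 1 := by simp [Cone, wl_one]

lemma cone_transport (hgen : Subgroup.closure (S : Set G) = ⊤) {x z : G}
    (hz : Cone S x z) (w : G) :
    Cone S (x * z) w ↔ (Wl S (z * w) = Wl S z + Wl S w ∧ Cone S x (z * w)) := by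
  unfold Cone at hz ⊢
  have e : Wl S (x * z * w) = Wl S (x * (z * w)) := by rw [mul_assoc]
  have t1 : Wl S (x * (z * w)) ≤ Wl S x + Wl S (z * w) := wl_mul_le hgen _ _
  have t2 : Wl S (z * w) ≤ Wl S z + Wl S w := wl_mul_le hgen _ _
  constructor
  · intro h
    exact ⟨by omega, by omega⟩
  · rintro ⟨h1, h2⟩
    omega

lemma cone_prefix (hgen : Subgroup.closure (S : Set G) = ⊤) {x z : G} (hz : Cone S x z)
    {n : ℕ} (hn : n + 1 = Wl S z) :
    ∃ z₁ a : G, z = z₁ * a ∧ Wl S z₁ = n ∧ Wl S a = 1 ∧ Cone S x z₁ := by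
  obtain ⟨f, hf, hfe⟩ := chain_exists hgen z
  refine ⟨f n, (f n)⁻¹ * f (n + 1), ?_, ?_, ?_, ?_⟩
  · rw [← mul_assoc]
    simp [hn, hfe]
  · have := hf.eval (t := n) (by omega)
    simpa using this
  · have := hf.2 n (n + 1) (by omega) (by omega)
    omega
  · unfold Cone at hz ⊢
    have e1 : Wl S (f n) = n := by
      have := hf.eval (t := n) (by omega)
      simpa using this
    have e2 : Wl S ((f n)⁻¹ * z) = Wl S z - n := by
      have := hf.2 n (Wl S z) (by omega) (le_refl _)
      rw [hfe] at this
      simpa using this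
    have t1 : Wl S (x * f n) ≤ Wl S x + Wl S (f n) := wl_mul_le hgen _ _
    have t2 : Wl S (x * z) ≤ Wl S (x * f n) + Wl S ((f n)⁻¹ * z) := by
      have := wl_mul_le hgen (x * f n) ((f n)⁻¹ * z)
      simpa [mul_assoc] using this
    omega

variable (S) in
/-- Profile equality at radius `2D+2`. -/
def ProfEq (D : ℕ) (x y : G) : Prop :=
  ∀ h : G, Wl S h ≤ 2 * D + 2 →
    (Wl S (x * h) : ℤ) - (Wl S x : ℤ) = (Wl S (y * h) : ℤ) - (Wl S y : ℤ)

/-- Cannon's lemma: the cone is determined by the profile. -/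
lemma cone_of_profile (hgen : Subgroup.closure (S : Set G) = ⊤) {D : ℕ}
    (h4 : ∀ x y z w : G, Wl S (x⁻¹ * y) + Wl S (z⁻¹ * w) ≤
      max (Wl S (x⁻¹ * z) + Wl S (y⁻¹ * w)) (Wl S (x⁻¹ * w) + Wl S (y⁻¹ * z)) + D)
    {x y : G} (hπ : ProfEq S D x y) :
    ∀ z, Cone S x z → Cone S y z := by
  suffices H : ∀ n z, Wl S z = n → Cone S x z → Cone S y z by
    intro z hz
    exact H (Wl S z) z rfl hz
  intro n
  induction n using Nat.strong_induction_on with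
  | _ n IH =>
  intro z hz hxz
  rcases Nat.eq_zero_or_pos n with rfl | hn
  · rw [wl_eq_zero hgen hz]
    exact cone_one y
  rcases Nat.eq_zero_or_pos (Wl S y) with hy0 | hy1
  · have : y = 1 := wl_eq_zero hgen hy0
    subst this
    unfold Cone
    simp [hy0]
  obtain ⟨n', rfl⟩ : ∃ n', n = n' + 1 := ⟨n - 1, by omega⟩
  obtain ⟨z₁, a, rfl, hz₁, ha, hxz₁⟩ := cone_prefix hgen hxz (n := n') (by omega)
  have hyz₁ : Cone S y z₁ := IH n' (by omega) z₁ hz₁ hxz₁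
  by_contra hcon
  -- main estimate
  have hzlen : Wl S (z₁ * a) = n' + 1 := hz
  have hyzle : Wl S (y * (z₁ * a)) ≤ Wl S y + (n' + 1) - 1 := by
    have htr := wl_mul_le hgen y (z₁ * a)
    have : Wl S (y * (z₁ * a)) ≠ Wl S y + Wl S (z₁ * a) := hcon
    omega
  have hyzge : Wl S y + n' ≤ Wl S (y * (z₁ * a)) + 1 := by
    have h1 : Wl S (y * z₁) ≤ Wl S (y * (z₁ * a)) + Wl S a := by
      have := wl_mul_le hgen (y * (z₁ * a)) a⁻¹
      rw [wl_inv hgen] at this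
      simpa [mul_assoc] using this
    unfold Cone at hyz₁
    omega
  set E := y * (z₁ * a) with hE
  set ℓu := Wl S E with hℓu
  obtain ⟨u, hu, hue⟩ := chain_exists hgen E
  obtain ⟨ζ, hζ, hζe⟩ := chain_exists hgen (z₁ * a)
  rw [hz] at hζ hζe
  -- two chains from E
  have hα : IsChain S E (fun σ => u (ℓu - σ)) ℓu := by
    have := chain_reverse hgen hu
    rwa [hue] at this
  have hβ : IsChain S E (fun σ => y * ζ (n' + 1 - σ)) (n' + 1) := by
    have h1 : IsChain S y (fun s => y * ζ s) (n' + 1) := by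
      have := chain_translate y hζ
      rwa [mul_one] at this
    have h2 := chain_reverse hgen h1
    rwa [hζe] at h2
  have step : Wl S ((u (ℓu - n'))⁻¹ * (y * ζ 1)) ≤ 2 * D := by
    have hc := chains_close hgen h4 hα hβ (t := n') ?_
    · have e1 : n' + 1 - n' = 1 := by omega
      simpa [e1] using hc
    · have e1 : u (ℓu - ℓu) = 1 := by simpa using hu.1
      have e2 : y * ζ (n' + 1 - (n' + 1)) = y := by
        rw [Nat.sub_self, hζ.1, mul_one]
      rw [e1, e2]
      have expand : gp S E 1 y = (ℓu : ℤ) + (n' + 1) - Wl S y := by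
        unfold gp
        have c1 : Wl S (E⁻¹ * 1) = ℓu := by rw [mul_one, wl_inv hgen]
        have c2 : Wl S (E⁻¹ * y) = n' + 1 := by
          have e : E⁻¹ * y = (z₁ * a)⁻¹ := by rw [hE]; group
          rw [e, wl_inv hgen]
          exact hz
        have c3 : Wl S ((1 : G)⁻¹ * y) = Wl S y := by simp
        rw [c1, c2, c3]
        push_cast
        ring
      rw [expand]
      omega
  -- the short element h
  set m := ℓu - (n' + 1) with hm
  set h : G := y⁻¹ * u m with hhdef
  have hyh : Wl S (y * h) = m := by
    have : y * h = u m := by rw [hhdef]; group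
    rw [this]
    have := hu.eval (t := m) (by omega)
    simpa using this
  have hstep2 : Wl S ((u (ℓu - n'))⁻¹ * u m) ≤ 1 := by
    rcases le_or_gt (n' + 1) ℓu with hcase | hcase
    · have : m ≤ ℓu - n' := by omega
      have := hu.2 m (ℓu - n') this (by omega)
      rw [wl_symm hgen] at this
      omega
    · have hmeq : m = 0 := by omega
      have hle : ℓu - n' = 0 ∨ ℓu - n' = ℓu := by omega
      have huln : ℓu - n' ≤ ℓu := by omega
      have := hu.2 (ℓu - n') ℓu huln (le_refl _)
      rw [wl_symm hgen] at this
      have h0 : Wl S ((u (ℓu - n'))⁻¹ * u m) = Wl S ((u (ℓu - n'))⁻¹ * u 0) := by rw [hmeq]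
      rw [h0]
      have := hu.2 0 (ℓu - n') (by omega) huln
      rw [wl_symm hgen] at this
      omega
  have hh : Wl S h ≤ 2 * D + 2 := by
    have t1 : Wl S (y⁻¹ * u (ℓu - n')) ≤ 2 * D + 1 := by
      have e : y⁻¹ * u (ℓu - n') = ζ 1 * ((y * ζ 1)⁻¹ * u (ℓu - n')) := by group
      have t2 : Wl S (ζ 1) = 1 := by
        have := hζ.eval (t := 1) (by omega)
        simpa using this
      have t3 : Wl S ((y * ζ 1)⁻¹ * u (ℓu - n')) ≤ 2 * D := by
        rw [wl_symm hgen]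
        exact step
      calc Wl S (y⁻¹ * u (ℓu - n')) = Wl S (ζ 1 * ((y * ζ 1)⁻¹ * u (ℓu - n'))) := by rw [← e]
        _ ≤ Wl S (ζ 1) + Wl S ((y * ζ 1)⁻¹ * u (ℓu - n')) := wl_mul_le hgen _ _
        _ ≤ 2 * D + 1 := by omega
    calc Wl S h = Wl S ((y⁻¹ * u (ℓu - n')) * ((u (ℓu - n'))⁻¹ * u m)) := by
          rw [hhdef]; congr 1; group
      _ ≤ Wl S (y⁻¹ * u (ℓu - n')) + Wl S ((u (ℓu - n'))⁻¹ * u m) := wl_mul_le hgen _ _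
      _ ≤ 2 * D + 2 := by omega
  have hmy : m + 1 ≤ Wl S y := by omega
  have hxh : (Wl S (x * h) : ℤ) = Wl S x + m - Wl S y := by
    have := hπ h hh
    rw [hyh] at this
    omega
  have hhz : Wl S (h⁻¹ * (z₁ * a)) ≤ n' + 1 := by
    have e : h⁻¹ * (z₁ * a) = (u m)⁻¹ * u ℓu := by
      rw [hhdef, hue, hE]
      group
    rw [e]
    have := hu.2 m ℓu (by omega) (le_refl _)
    omega
  have hfinal : Wl S (x * (z₁ * a)) ≤ Wl S (x * h) + Wl S (h⁻¹ * (z₁ * a)) := by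
    have := wl_mul_le hgen (x * h) (h⁻¹ * (z₁ * a))
    simpa [mul_assoc] using this
  unfold Cone at hxz
  omega

lemma profEq_symm {D : ℕ} {x y : G} (h : ProfEq S D x y) : ProfEq S D y x :=
  fun a ha => (h a ha).symm

lemma wl_pow_le (hgen : Subgroup.closure (S : Set G) = ⊤) (P : G) (k : ℕ) :
    Wl S (P ^ k) ≤ k * Wl S P := by
  induction k with
  | zero => simp [wl_one]
  | succ k ih =>
      have e : P ^ (k + 1) = P ^ k * P := by rw [pow_succ]
      rw [e]
      have := wl_mul_le hgen (P ^ k) P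
      calc Wl S (P ^ k * P) ≤ Wl S (P ^ k) + Wl S P := this
        _ ≤ (k + 1) * Wl S P := by rw [add_mul]; omega

lemma cone_pump (hgen : Subgroup.closure (S : Set G) = ⊤) {D : ℕ}
    (h4 : ∀ x y z w : G, Wl S (x⁻¹ * y) + Wl S (z⁻¹ * w) ≤
      max (Wl S (x⁻¹ * z) + Wl S (y⁻¹ * w)) (Wl S (x⁻¹ * w) + Wl S (y⁻¹ * z)) + D)
    {x P : G} (hπ : ProfEq S D x (x * P)) (hP : Cone S x P) :
    ∀ k : ℕ, Wl S (x * P ^ k) = Wl S x + k * Wl S P ∧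
      (∀ z, Cone S (x * P ^ k) z ↔ Cone S x z) := by
  have coneiff : ∀ w, Cone S (x * P) w ↔ Cone S x w := by
    intro w
    constructor
    · exact fun h => cone_of_profile hgen h4 (profEq_symm hπ) w h
    · exact fun h => cone_of_profile hgen h4 hπ w h
  intro k
  induction k with
  | zero => exact ⟨by simp, by simp⟩
  | succ k ih =>
      obtain ⟨ihlen, ihcone⟩ := ih
      have hconeP : Cone S (x * P ^ k) P := (ihcone P).2 hP
      have e : x * P ^ (k + 1) = (x * P ^ k) * P := by
        rw [pow_succ, mul_assoc]
      constructor
      · rw [e]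
        unfold Cone at hconeP
        rw [hconeP, ihlen, add_mul]
        omega
      · intro w
        rw [e]
        rw [cone_transport hgen hconeP w]
        have base := cone_transport hgen hP w
        constructor
        · rintro ⟨h1, h2⟩
          exact (coneiff w).1 (base.2 ⟨h1, (ihcone (P * w)).1 h2⟩)
        · intro h
          obtain ⟨h1, h2⟩ := base.1 ((coneiff w).2 h)
          exact ⟨h1, (ihcone (P * w)).2 h2⟩

lemma straight_of_pump (hgen : Subgroup.closure (S : Set G) = ⊤) {x P : G}
    (hlen : ∀ k : ℕ, Wl S (x * P ^ k) = Wl S x + k * Wl S P) (k : ℕ) :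
    Wl S (P ^ k) = k * Wl S P := by
  refine le_antisymm (wl_pow_le hgen P k) ?_
  have h1 := hlen k
  have h2 := wl_mul_le hgen x (P ^ k)
  omega

lemma wl_zpow_straight (hgen : Subgroup.closure (S : Set G) = ⊤) {P : G} {L : ℕ}
    (hstr : ∀ k : ℕ, Wl S (P ^ k) = k * L) (i : ℤ) :
    Wl S (P ^ i) = i.natAbs * L := by
  rcases Int.natAbs_eq i with h | h
  · rw [h, zpow_natCast]
    exact hstr i.natAbs
  · rw [h]
    have : P ^ (-(i.natAbs : ℤ)) = (P ^ (i.natAbs : ℤ))⁻¹ := by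
      rw [zpow_neg]
    rw [this]
    have e : (1 : G)⁻¹ * (P ^ (i.natAbs : ℤ))⁻¹ = (P ^ (i.natAbs : ℤ))⁻¹ := by simp
    have := wl_inv hgen (P ^ (i.natAbs : ℤ))
    rw [this, zpow_natCast, hstr i.natAbs]
    congr 1
    omega

end Cone

section Build

open Finset

variable {S : Finset G}

/-- Stage 1: produce a "straight" element `P` commuting with a conjugate of `g`. -/
lemma exists_straight (hgen : Subgroup.closure (S : Set G) = ⊤) {D : ℕ}
    (h4 : ∀ x y z w : G, Wl S (x⁻¹ * y) + Wl S (z⁻¹ * w) ≤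
      max (Wl S (x⁻¹ * z) + Wl S (y⁻¹ * w)) (Wl S (x⁻¹ * w) + Wl S (y⁻¹ * z)) + D)
    {g : G} (hg : ¬IsOfFinOrder g) :
    ∃ (v P : G) (L : ℕ), 1 ≤ L ∧ (∀ k : ℕ, Wl S (P ^ k) = k * L) ∧
      (v⁻¹ * g * v) * P = P * (v⁻¹ * g * v) := by
  classical
  set ρ := 2 * D + 2 with hρ
  set Wg := Wl S g with hWg
  set PF : Finset (Finset (G × ℤ) × G) :=
    ((ballFS hgen ρ ×ˢ Finset.Icc (-(ρ : ℤ)) (ρ : ℤ)).powerset ×ˢ ballFS hgen (4 * D + Wg))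
    with hPF
  obtain ⟨n, hn1, hn2⟩ := exists_big_power hgen hg (3 * Wg + PF.card + 2)
  set ℓ := Wl S (g ^ n) with hℓ
  obtain ⟨u, hu, hue⟩ := chain_exists hgen (g ^ n)
  rw [← hℓ] at hu hue
  set F : ℕ → (Finset (G × ℤ) × G) := fun t =>
    ((ballFS hgen ρ).image (fun h => (h, (Wl S (u t * h) : ℤ) - (Wl S (u t) : ℤ))),
      (u t)⁻¹ * (g * u t)) with hF
  have hgconj : (g ^ n)⁻¹ * (g * g ^ n) = g := by
    have hc : g * g ^ n = g ^ n * g := (Commute.refl g).pow_right n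
    rw [hc, ← mul_assoc, inv_mul_cancel, one_mul]
  have hmaps : ∀ t ∈ Finset.Icc (2 * Wg) (ℓ - Wg), F t ∈ PF := by
    intro t ht
    simp only [Finset.mem_Icc] at ht
    rw [hPF, Finset.mem_product]
    constructor
    · rw [Finset.mem_powerset]
      intro p hp
      simp only [hF, Finset.mem_image] at hp
      obtain ⟨h, hh, rfl⟩ := hp
      rw [Finset.mem_product]
      refine ⟨hh, ?_⟩
      rw [mem_ballFS] at hh
      have t1 : Wl S (u t * h) ≤ Wl S (u t) + Wl S h := wl_mul_le hgen _ _
      have t2 : Wl S (u t) ≤ Wl S (u t * h) + Wl S h := by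
        have := wl_mul_le hgen (u t * h) h⁻¹
        rw [wl_inv hgen] at this
        simpa using this
      simp only [Finset.mem_Icc]
      omega
    · rw [mem_ballFS]
      have := corridor_conj hgen h4 hu hue (w := g) (t := t) (by omega)
        (by rw [hgconj]; omega)
      calc Wl S ((u t)⁻¹ * (g * u t)) ≤ 4 * D + Wl S g := this
        _ ≤ 4 * D + Wg := by omega
  have hcard : PF.card < (Finset.Icc (2 * Wg) (ℓ - Wg)).card := by
    rw [Nat.card_Icc]
    omega
  obtain ⟨a, ha, b, hb, hab, hFeq⟩ :=
    Finset.exists_ne_map_eq_of_card_lt_of_maps_to hcard hmaps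
  simp only [Finset.mem_Icc] at ha hb
  -- order so that s < t
  obtain ⟨s, t, hs, ht, hst, hFst⟩ : ∃ s t : ℕ, 2 * Wg ≤ s ∧ t ≤ ℓ - Wg ∧ s < t ∧ F s = F t := by
    rcases lt_or_gt_of_ne hab with h | h
    · exact ⟨a, b, ha.1, hb.2, h, hFeq⟩
    · exact ⟨b, a, hb.1, ha.2, h, hFeq.symm⟩
  have hsℓ : s ≤ ℓ := by omega
  have htℓ : t ≤ ℓ := by omega
  set v := u s with hv
  set P := (u s)⁻¹ * u t with hP
  set L := t - s with hL
  have hWus : Wl S (u s) = s := by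
    have := hu.eval hsℓ
    simpa using this
  have hWut : Wl S (u t) = t := by
    have := hu.eval htℓ
    simpa using this
  have hWP : Wl S P = L := hu.2 s t (by omega) htℓ
  have hxP : u s * P = u t := by rw [hP]; group
  have hCone : Cone S (u s) P := by
    unfold Cone
    rw [hxP, hWus, hWP, hWut]
    omega
  -- profile equality
  have hQ := congrArg Prod.fst hFst
  have hc := congrArg Prod.snd hFst
  simp only [hF] at hQ hc
  have hπ : ProfEq S D (u s) (u s * P) := by
    intro h hh
    rw [hxP]
    have hmem : (h, (Wl S (u s * h) : ℤ) - (Wl S (u s) : ℤ)) ∈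
        (ballFS hgen ρ).image (fun h => (h, (Wl S (u s * h) : ℤ) - (Wl S (u s) : ℤ))) :=
      Finset.mem_image.2 ⟨h, (mem_ballFS hgen).2 (by omega), rfl⟩
    rw [hQ] at hmem
    obtain ⟨h', hh', heq⟩ := Finset.mem_image.1 hmem
    have h1 : h' = h := congrArg Prod.fst heq
    have h2 := congrArg Prod.snd heq
    simp only at h1 h2
    rw [h1] at h2
    exact h2.symm
  have hpump := cone_pump hgen h4 hπ hCone
  have hstr : ∀ k : ℕ, Wl S (P ^ k) = k * Wl S P :=
    straight_of_pump hgen (fun k => (hpump k).1)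
  rw [hWP] at hstr
  refine ⟨v, P, L, by omega, hstr, ?_⟩
  -- commutation from equal conjugates
  have hceq : (u s)⁻¹ * (g * u s) = (u t)⁻¹ * (g * u t) := hc
  rw [← hxP] at hceq
  have : (v⁻¹ * g * v) = P⁻¹ * (v⁻¹ * g * v) * P := by
    rw [hv]
    calc (u s)⁻¹ * g * u s = (u s)⁻¹ * (g * u s) := by rw [mul_assoc]
      _ = (u s * P)⁻¹ * (g * (u s * P)) := hceq
      _ = P⁻¹ * ((u s)⁻¹ * g * u s) * P := by group
  have key : P * (v⁻¹ * g * v) = (v⁻¹ * g * v) * P := by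
    conv_lhs => rw [this]
    group
  exact key.symm

/-- Points on a geodesic to `P^k` are close to powers of a straight element `P`. -/
lemma axis_align (hgen : Subgroup.closure (S : Set G) = ⊤) {D : ℕ}
    (h4 : ∀ x y z w : G, Wl S (x⁻¹ * y) + Wl S (z⁻¹ * w) ≤
      max (Wl S (x⁻¹ * z) + Wl S (y⁻¹ * w)) (Wl S (x⁻¹ * w) + Wl S (y⁻¹ * z)) + D)
    {P : G} {L : ℕ} (hL : 1 ≤ L) (hstr : ∀ k : ℕ, Wl S (P ^ k) = k * L)
    {f : ℕ → G} {k : ℕ} (hf : IsChain S 1 f (k * L)) (hend : f (k * L) = P ^ k)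
    {t : ℕ} (ht : t ≤ k * L) :
    ∃ i : ℕ, i ≤ k ∧ Wl S ((P ^ i)⁻¹ * f t) ≤ 2 * D + L := by
  set i := t / L with hi
  have hik : i ≤ k := by
    rw [hi]
    have h1 : t / L ≤ (k * L) / L := Nat.div_le_div_right ht
    rwa [Nat.mul_div_cancel k (by omega)] at h1
  obtain ⟨w, hw, hwe⟩ := chain_exists hgen (P ^ i)
  rw [hstr i] at hw hwe
  have hiLt : i * L ≤ t := by
    rw [hi]
    exact Nat.div_mul_le_self t L
  have hup : t < i * L + L := by
    have hmod := Nat.mod_lt t (show 0 < L by omega)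
    calc t = L * (t / L) + t % L := (Nat.div_add_mod t L).symm
      _ < L * (t / L) + L := Nat.add_lt_add_left hmod _
      _ = i * L + L := by rw [hi, Nat.mul_comm]
  have key : Wl S ((f (i * L))⁻¹ * w (i * L)) ≤ 2 * D := by
    refine chains_close hgen h4 hf hw ?_
    rw [hend, hwe]
    have hsplit : (P ^ k)⁻¹ * P ^ i = (P ^ (k - i))⁻¹ := by
      have hpk : P ^ k = P ^ i * P ^ (k - i) := by
        rw [← pow_add]
        congr 1
        omega
      rw [hpk]
      group
    have expand : gp S 1 (P ^ k) (P ^ i) = 2 * ((i * L : ℕ) : ℤ) := by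
      unfold gp
      have c1 : Wl S ((1 : G)⁻¹ * P ^ k) = k * L := by
        rw [inv_one, one_mul, hstr]
      have c2 : Wl S ((1 : G)⁻¹ * P ^ i) = i * L := by
        rw [inv_one, one_mul, hstr]
      have c3 : Wl S ((P ^ k)⁻¹ * P ^ i) = (k - i) * L := by
        rw [hsplit]
        have e2 : Wl S ((P ^ (k - i))⁻¹) = Wl S (P ^ (k - i)) := wl_inv hgen _
        rw [e2, hstr]
      rw [c1, c2, c3]
      push_cast [Nat.cast_sub hik]
      ring
    rw [expand]
  refine ⟨i, hik, ?_⟩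
  have hwiL : w (i * L) = P ^ i := hwe
  have tri : Wl S ((P ^ i)⁻¹ * f t) ≤
      Wl S ((P ^ i)⁻¹ * f (i * L)) + Wl S ((f (i * L))⁻¹ * f t) := wl_tri hgen _ _ _
  have t1 : Wl S ((P ^ i)⁻¹ * f (i * L)) ≤ 2 * D := by
    rw [wl_symm hgen, ← hwiL]
    exact key
  have t2 : Wl S ((f (i * L))⁻¹ * f t) ≤ L := by
    have heq := hf.2 (i * L) t hiLt ht
    rw [heq]
    omega
  omega

/-- Stage 2: some positive power of `g` is conjugate to a nonzero power of a straight
element. -/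
lemma exists_power_eq (hgen : Subgroup.closure (S : Set G) = ⊤) {D : ℕ}
    (h4 : ∀ x y z w : G, Wl S (x⁻¹ * y) + Wl S (z⁻¹ * w) ≤
      max (Wl S (x⁻¹ * z) + Wl S (y⁻¹ * w)) (Wl S (x⁻¹ * w) + Wl S (y⁻¹ * z)) + D)
    {g : G} (hg : ¬IsOfFinOrder g) :
    ∃ (v P : G) (L d : ℕ) (j : ℤ), 1 ≤ L ∧ 1 ≤ d ∧ j ≠ 0 ∧
      (∀ k : ℕ, Wl S (P ^ k) = k * L) ∧ g ^ d = v * P ^ j * v⁻¹ := by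
  classical
  obtain ⟨v, P, L, hL, hstr, hcomm⟩ := exists_straight hgen h4 hg
  set gs := v⁻¹ * g * v with hgs
  have hco : Commute gs P := hcomm
  -- for every exponent e, g*^e is boundedly close to the P-axis
  have hJ : ∀ e : ℕ, ∃ j : ℤ, Wl S (gs ^ e * P ^ j) ≤ 8 * D + 2 * L := by
    intro e
    set w := gs ^ e with hwdef
    have hcoe : Commute w (P ^ (3 * Wl S w + 1)) := (hco.pow_pow e (3 * Wl S w + 1))
    set k := 3 * Wl S w + 1 with hk
    obtain ⟨f, hf, hfe⟩ := chain_exists hgen (P ^ k)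
    rw [hstr k] at hf hfe
    have hwPk : (P ^ k)⁻¹ * (w * P ^ k) = w := by
      rw [hcoe.eq, ← mul_assoc, inv_mul_cancel, one_mul]
    have hkL : 3 * Wl S w + 1 ≤ k * L := by
      calc 3 * Wl S w + 1 = k := hk.symm
        _ ≤ k * L := Nat.le_mul_of_pos_right k (by omega)
    obtain ⟨t', ht'k, hb1, hb2, hmid⟩ := corridor hgen h4 hf hfe (w := w)
      (t := 2 * Wl S w) (by omega) (by rw [hwPk]; omega)
    obtain ⟨i, hik, hali⟩ := axis_align hgen h4 hL hstr hf hfe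
      (t := 2 * Wl S w) (by omega)
    obtain ⟨i', hik', hali'⟩ := axis_align hgen h4 hL hstr hf hfe (t := t') ht'k
    -- combine
    have hc1 : Wl S ((P ^ i)⁻¹ * (w * P ^ i')) ≤ 8 * D + 2 * L := by
      have tri1 : Wl S ((P ^ i)⁻¹ * (w * P ^ i')) ≤
          Wl S ((P ^ i)⁻¹ * f (2 * Wl S w)) + Wl S ((f (2 * Wl S w))⁻¹ * (w * P ^ i')) :=
        wl_tri hgen _ _ _
      have tri2 : Wl S ((f (2 * Wl S w))⁻¹ * (w * P ^ i')) ≤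
          Wl S ((f (2 * Wl S w))⁻¹ * (w * f t')) + Wl S ((w * f t')⁻¹ * (w * P ^ i')) :=
        wl_tri hgen _ _ _
      have e3 : Wl S ((w * f t')⁻¹ * (w * P ^ i')) = Wl S ((P ^ i')⁻¹ * f t') := by
        have e : (w * f t')⁻¹ * (w * P ^ i') = (f t')⁻¹ * P ^ i' := by group
        rw [e, wl_symm hgen]
      omega
    refine ⟨(i' : ℤ) - (i : ℤ), ?_⟩
    have hrw : (P ^ i)⁻¹ * (w * P ^ i') = w * P ^ ((i' : ℤ) - (i : ℤ)) := by
      have hcwi : Commute w (P ^ i) := hco.pow_pow e i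
      have e1 : (P ^ i)⁻¹ * (w * P ^ i') = w * ((P ^ i)⁻¹ * P ^ i') := by
        calc (P ^ i)⁻¹ * (w * P ^ i') = ((P ^ i)⁻¹ * w) * P ^ i' := by rw [mul_assoc]
          _ = (w * (P ^ i)⁻¹) * P ^ i' := by rw [← hcwi.inv_right.eq]
          _ = w * ((P ^ i)⁻¹ * P ^ i') := by rw [mul_assoc]
      rw [e1]
      congr 1
      rw [← zpow_natCast P i, ← zpow_natCast P i', ← zpow_neg, ← zpow_add]
      congr 1
      ring
    rw [← hrw]
    exact hc1
  choose J hJbound using hJ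
  -- pigeonhole on exponents
  set N := (ballFS hgen (8 * D + 2 * L)).card with hN
  have hmaps : ∀ e ∈ Finset.range (N + 1), gs ^ e * P ^ (J e) ∈
      ballFS hgen (8 * D + 2 * L) := by
    intro e _
    exact (mem_ballFS hgen).2 (hJbound e)
  have hcard : (ballFS hgen (8 * D + 2 * L)).card < (Finset.range (N + 1)).card := by
    simp [hN]
  obtain ⟨a, _, b, _, hab, heq⟩ :=
    Finset.exists_ne_map_eq_of_card_lt_of_maps_to hcard hmaps
  obtain ⟨e₁, e₂, he, heq⟩ : ∃ e₁ e₂ : ℕ, e₁ < e₂ ∧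
      gs ^ e₁ * P ^ (J e₁) = gs ^ e₂ * P ^ (J e₂) := by
    rcases lt_or_gt_of_ne hab with h | h
    · exact ⟨a, b, h, heq⟩
    · exact ⟨b, a, h, heq.symm⟩
  set d := e₂ - e₁ with hd
  have hsplit : gs ^ e₂ = gs ^ e₁ * gs ^ d := by
    rw [← pow_add]
    congr 1
    omega
  rw [hsplit, mul_assoc] at heq
  have hkey : P ^ (J e₁) = gs ^ d * P ^ (J e₂) := mul_left_cancel heq
  have hgsd : gs ^ d = P ^ (J e₁ - J e₂) := by
    rw [zpow_sub]
    rw [hkey]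
    group
  have hjne : J e₁ - J e₂ ≠ 0 := by
    intro h0
    rw [h0, zpow_zero] at hgsd
    have : g ^ d = 1 := by
      have e : g ^ d = v * gs ^ d * v⁻¹ := by
        rw [hgs]
        rw [show v⁻¹ * g * v = v⁻¹ * g * (v⁻¹)⁻¹ by group]
        rw [← conj_pow]
        group
      rw [e, hgsd, mul_one, mul_inv_cancel]
    exact hg (isOfFinOrder_iff_pow_eq_one.2 ⟨d, by omega, this⟩)
  refine ⟨v, P, L, d, J e₁ - J e₂, hL, by omega, hjne, hstr, ?_⟩
  have e : g ^ d = v * gs ^ d * v⁻¹ := by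
    rw [hgs]
    rw [show v⁻¹ * g * v = v⁻¹ * g * (v⁻¹)⁻¹ by group]
    rw [← conj_pow]
    group
  rw [e, hgsd]

lemma straight_inv (hgen : Subgroup.closure (S : Set G) = ⊤) {P : G} {L : ℕ}
    (hstr : ∀ k : ℕ, Wl S (P ^ k) = k * L) (k : ℕ) :
    Wl S ((P⁻¹) ^ k) = k * L := by
  rw [inv_pow, wl_inv hgen, hstr]

lemma axis_align_z (hgen : Subgroup.closure (S : Set G) = ⊤) {D : ℕ}
    (h4 : ∀ x y z w : G, Wl S (x⁻¹ * y) + Wl S (z⁻¹ * w) ≤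
      max (Wl S (x⁻¹ * z) + Wl S (y⁻¹ * w)) (Wl S (x⁻¹ * w) + Wl S (y⁻¹ * z)) + D)
    {P : G} {L : ℕ} (hL : 1 ≤ L) (hstr : ∀ k : ℕ, Wl S (P ^ k) = k * L)
    {f : ℕ → G} {α : ℤ}
    (hf : IsChain S 1 f (Wl S (P ^ α))) (hend : f (Wl S (P ^ α)) = P ^ α)
    {t : ℕ} (ht : t ≤ Wl S (P ^ α)) :
    ∃ i : ℤ, Wl S ((P ^ i)⁻¹ * f t) ≤ 2 * D + L := by
  have hwz := wl_zpow_straight hgen hstr α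
  rcases Int.natAbs_eq α with hα | hα
  · set m := α.natAbs with hm
    have hPm : P ^ α = P ^ m := by rw [hα, zpow_natCast]
    rw [hPm] at hf hend
    rw [hPm, hstr] at ht
    have hf' : IsChain S 1 f (m * L) := by rwa [hstr] at hf
    have hend' : f (m * L) = P ^ m := by rwa [hstr] at hend
    obtain ⟨i, _, hi⟩ := axis_align hgen h4 hL hstr hf' hend' ht
    refine ⟨(i : ℤ), ?_⟩
    rwa [zpow_natCast]
  · set m := α.natAbs with hm
    have hPm : P ^ α = (P⁻¹) ^ m := by
      rw [hα, zpow_neg, zpow_natCast, inv_pow]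
    have hstr' := straight_inv hgen hstr
    rw [hPm] at hf hend
    rw [hPm] at ht
    have hlen : Wl S ((P⁻¹) ^ m) = m * L := hstr' m
    have hf' : IsChain S 1 f (m * L) := by rwa [hlen] at hf
    have hend' : f (m * L) = (P⁻¹) ^ m := by rwa [hlen] at hend
    rw [hlen] at ht
    obtain ⟨i, _, hi⟩ := axis_align hgen h4 hL hstr' hf' hend' ht
    refine ⟨-(i : ℤ), ?_⟩
    have e : P ^ (-(i : ℤ)) = (P⁻¹) ^ i := by
      rw [zpow_neg, zpow_natCast, inv_pow]
    rwa [e]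

/-- length of a point close to a power: transfer bound. -/
lemma wl_close_power (hgen : Subgroup.closure (S : Set G) = ⊤)
    {x y : G} {c : ℕ} (h : Wl S (x⁻¹ * y) ≤ c) :
    Wl S y ≤ Wl S x + c ∧ Wl S x ≤ Wl S y + c := by
  constructor
  · have := wl_mul_le hgen x (x⁻¹ * y)
    simp only [← mul_assoc, mul_inv_cancel, one_mul] at this
    omega
  · have := wl_mul_le hgen y (y⁻¹ * x)
    simp only [← mul_assoc, mul_inv_cancel, one_mul] at this
    have h2 : Wl S (y⁻¹ * x) = Wl S (x⁻¹ * y) := wl_symm hgen y x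
    omega

/-- Data extraction for the main argument: at each good parameter `t`, the chains to
`P^(-α)` and to `cc * P^β` give a bounded element `(P^i)⁻¹ * cc * P^(i')`. -/
lemma core_data (hgen : Subgroup.closure (S : Set G) = ⊤) {D : ℕ}
    (h4 : ∀ x y z w : G, Wl S (x⁻¹ * y) + Wl S (z⁻¹ * w) ≤
      max (Wl S (x⁻¹ * z) + Wl S (y⁻¹ * w)) (Wl S (x⁻¹ * w) + Wl S (y⁻¹ * z)) + D)
    {P : G} {L : ℕ} (hL : 1 ≤ L) (hstr : ∀ k : ℕ, Wl S (P ^ k) = k * L)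
    (cc : G) {α β : ℤ}
    {fA fY u' : ℕ → G}
    (hfA : IsChain S 1 fA (Wl S (P ^ (-α)))) (hAe : fA (Wl S (P ^ (-α))) = P ^ (-α))
    (hfY : IsChain S 1 fY (Wl S (cc * P ^ β))) (hYe : fY (Wl S (cc * P ^ β)) = cc * P ^ β)
    (hu' : IsChain S 1 u' (Wl S (P ^ β))) (hu'e : u' (Wl S (P ^ β)) = P ^ β)
    {t : ℕ} (h2t : 2 * (t : ℤ) ≤ gp S 1 (P ^ (-α)) (cc * P ^ β))
    (htc : 2 * Wl S cc ≤ t) :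
    ∃ i i' : ℤ, Wl S ((P ^ i)⁻¹ * fA t) ≤ 2 * D + L ∧
      Wl S ((P ^ i)⁻¹ * (cc * P ^ i')) ≤ 8 * D + 2 * L := by
  set ℓA := Wl S (P ^ (-α)) with hℓA
  set ℓY := Wl S (cc * P ^ β) with hℓY
  set ℓ' := Wl S (P ^ β) with hℓ'
  set Wc := Wl S cc with hWc
  -- bounds on t
  have htA : t ≤ ℓA := by
    have h1 := gp_le_left hgen 1 (P ^ (-α)) (cc * P ^ β)
    have h2 : Wl S ((1 : G)⁻¹ * P ^ (-α)) = ℓA := by rw [inv_one, one_mul]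
    omega
  have htY : t ≤ ℓY := by
    have h1 := gp_le_right hgen 1 (P ^ (-α)) (cc * P ^ β)
    have h2 : Wl S ((1 : G)⁻¹ * (cc * P ^ β)) = ℓY := by rw [inv_one, one_mul]
    omega
  -- step 1: the two chains fellow-travel at time t
  have hclose : Wl S ((fA t)⁻¹ * fY t) ≤ 2 * D := by
    refine chains_close hgen h4 hfA hfY ?_
    rw [hAe, hYe]
    exact h2t
  -- step 2: fY t is close to cc * (point on chain to P^β)
  have hYle : ℓY ≤ Wc + ℓ' := by
    have := wl_mul_le hgen cc (P ^ β)
    omega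
  set σ := ℓY - t with hσ
  have hαc : IsChain S (cc * P ^ β) (fun s => fY (ℓY - s)) ℓY := by
    have := chain_reverse hgen hfY
    rwa [hYe] at this
  have hβc : IsChain S (cc * P ^ β) (fun s => cc * u' (ℓ' - s)) ℓ' := by
    have h1 : IsChain S cc (fun s => cc * u' s) ℓ' := by
      have := chain_translate cc hu'
      rwa [mul_one] at this
    have h2 := chain_reverse hgen h1
    rwa [hu'e] at h2
  have step2 : Wl S ((fY (ℓY - σ))⁻¹ * (cc * u' (ℓ' - σ))) ≤ 2 * D := by
    refine chains_close hgen h4 hαc hβc ?_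
    have e1 : fY (ℓY - ℓY) = 1 := by
      simpa using hfY.1
    have e2 : cc * u' (ℓ' - ℓ') = cc := by
      rw [Nat.sub_self, hu'.1, mul_one]
    rw [e1, e2]
    have expand : gp S (cc * P ^ β) 1 cc = (ℓY : ℤ) + ℓ' - Wc := by
      unfold gp
      have c1 : Wl S ((cc * P ^ β)⁻¹ * 1) = ℓY := by
        rw [mul_one, wl_inv hgen]
      have c2 : Wl S ((cc * P ^ β)⁻¹ * cc) = ℓ' := by
        have e : (cc * P ^ β)⁻¹ * cc = (P ^ β)⁻¹ := by group
        rw [e, wl_inv hgen]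
      have c3 : Wl S ((1 : G)⁻¹ * cc) = Wc := by rw [inv_one, one_mul]
      rw [c1, c2, c3]
    rw [expand]
    omega
  have hfYσ : fY (ℓY - σ) = fY t := by
    congr 1
    omega
  rw [hfYσ] at step2
  set t' := ℓ' - σ with ht'
  -- alignments
  obtain ⟨i, hi⟩ := axis_align_z hgen h4 hL hstr hfA hAe htA
  obtain ⟨i', hi'⟩ := axis_align_z hgen h4 hL hstr hu' hu'e (t := t') (by omega)
  refine ⟨i, i', hi, ?_⟩
  have tri1 : Wl S ((P ^ i)⁻¹ * (cc * P ^ i')) ≤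
      Wl S ((P ^ i)⁻¹ * fY t) + Wl S ((fY t)⁻¹ * (cc * P ^ i')) := wl_tri hgen _ _ _
  have tri2 : Wl S ((P ^ i)⁻¹ * fY t) ≤
      Wl S ((P ^ i)⁻¹ * fA t) + Wl S ((fA t)⁻¹ * fY t) := wl_tri hgen _ _ _
  have tri3 : Wl S ((fY t)⁻¹ * (cc * P ^ i')) ≤
      Wl S ((fY t)⁻¹ * (cc * u' t')) + Wl S ((cc * u' t')⁻¹ * (cc * P ^ i')) :=
    wl_tri hgen _ _ _
  have e4 : Wl S ((cc * u' t')⁻¹ * (cc * P ^ i')) = Wl S ((P ^ i')⁻¹ * u' t') := by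
    have e : (cc * u' t')⁻¹ * (cc * P ^ i') = (u' t')⁻¹ * P ^ i' := by group
    rw [e, wl_symm hgen]
  omega

lemma wl_conj_le (hgen : Subgroup.closure (S : Set G) = ⊤) (c x : G) :
    Wl S (c⁻¹ * x * c) ≤ Wl S x + 2 * Wl S c := by
  have t1 : Wl S (c⁻¹ * x * c) ≤ Wl S (c⁻¹ * x) + Wl S c := wl_mul_le hgen _ _
  have t2 : Wl S (c⁻¹ * x) ≤ Wl S c⁻¹ + Wl S x := wl_mul_le hgen _ _
  have t3 : Wl S c⁻¹ = Wl S c := wl_inv hgen c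
  omega

/-- If `cc` conjugates all powers of `a`-th powers of `P` to `b`-th powers, then
`|b| ≤ |a|` by comparing lengths. -/
lemma straight_dominate (hgen : Subgroup.closure (S : Set G) = ⊤)
    {P : G} {L : ℕ} (hL : 1 ≤ L) (hstr : ∀ k : ℕ, Wl S (P ^ k) = k * L) {cc : G} {a b : ℤ}
    (h : ∀ k : ℕ, cc⁻¹ * P ^ (a * k) * cc = P ^ (b * k)) : b.natAbs ≤ a.natAbs := by
  by_contra hcon
  push_neg at hcon
  set Wc := Wl S cc with hWc
  set k := 2 * Wc + 1 with hk
  have hlen : Wl S (P ^ (b * k)) ≤ Wl S (P ^ (a * k)) + 2 * Wc := by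
    rw [← h k]
    exact wl_conj_le hgen cc (P ^ (a * (k : ℤ)))
  rw [wl_zpow_straight hgen hstr, wl_zpow_straight hgen hstr] at hlen
  have hna : (a * (k : ℤ)).natAbs = a.natAbs * k := by
    rw [Int.natAbs_mul]
    simp
  have hnb : (b * (k : ℤ)).natAbs = b.natAbs * k := by
    rw [Int.natAbs_mul]
    simp
  rw [hna, hnb] at hlen
  -- now a pure ℕ inequality : b.natAbs * k * L ≤ a.natAbs * k * L + 2 * Wc
  have key : (a.natAbs + 1) * k * L ≤ b.natAbs * k * L :=
    Nat.mul_le_mul_right L (Nat.mul_le_mul_right k (by omega))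
  have expand : (a.natAbs + 1) * k * L = a.natAbs * k * L + k * L := by ring
  have hkL : k ≤ k * L := Nat.le_mul_of_pos_right k (by omega)
  omega

set_option maxHeartbeats 1000000 in
/-- The core dichotomy: either `cc` almost-commutes with a power of the straight element
`P`, or all products `P^α * cc * P^β` are long. -/
lemma core_dichotomy (hgen : Subgroup.closure (S : Set G) = ⊤) {D : ℕ}
    (h4 : ∀ x y z w : G, Wl S (x⁻¹ * y) + Wl S (z⁻¹ * w) ≤
      max (Wl S (x⁻¹ * z) + Wl S (y⁻¹ * w)) (Wl S (x⁻¹ * w) + Wl S (y⁻¹ * z)) + D)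
    {P : G} {L : ℕ} (hL : 1 ≤ L) (hstr : ∀ k : ℕ, Wl S (P ^ k) = k * L) (cc : G) :
    (∃ a : ℤ, a ≠ 0 ∧ (cc⁻¹ * P ^ a * cc = P ^ a ∨ cc⁻¹ * P ^ a * cc = P ^ (-a))) ∨
    (∃ K0 : ℕ, ∀ α β : ℤ, Wl S (P ^ α) + Wl S (P ^ β) ≤ Wl S (P ^ α * cc * P ^ β) + K0) := by
  classical
  set Wc := Wl S cc with hWc
  set C9 := 2 * D + L with hC9
  set C12 := 8 * D + 2 * L with hC12
  set NB := (ballFS hgen C12).card with hNB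
  set Wsp := 2 * C9 + 1 with hWsp
  set R0 := 2 * Wc + (NB + 1) * Wsp with hR0
  set K0 := 2 * R0 + Wc + 1 with hK0
  by_cases hgood : ∀ α β : ℤ, Wl S (P ^ α) + Wl S (P ^ β) ≤ Wl S (P ^ α * cc * P ^ β) + K0
  · exact Or.inr ⟨K0, hgood⟩
  left
  push_neg at hgood
  obtain ⟨α, β, hviol⟩ := hgood
  obtain ⟨fA, hfA, hAe⟩ := chain_exists hgen (P ^ (-α))
  obtain ⟨fY, hfY, hYe⟩ := chain_exists hgen (cc * P ^ β)
  obtain ⟨u', hu', hu'e⟩ := chain_exists hgen (P ^ β)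
  have hgpbig : (2 : ℤ) * R0 < gp S 1 (P ^ (-α)) (cc * P ^ β) := by
    have expand : gp S 1 (P ^ (-α)) (cc * P ^ β) =
        (Wl S (P ^ α) : ℤ) + Wl S (cc * P ^ β) - Wl S (P ^ α * cc * P ^ β) := by
      unfold gp
      have c1 : Wl S ((1 : G)⁻¹ * P ^ (-α)) = Wl S (P ^ α) := by
        rw [inv_one, one_mul, zpow_neg, wl_inv hgen]
      have c2 : Wl S ((1 : G)⁻¹ * (cc * P ^ β)) = Wl S (cc * P ^ β) := by
        rw [inv_one, one_mul]
      have c3 : Wl S ((P ^ (-α))⁻¹ * (cc * P ^ β)) = Wl S (P ^ α * cc * P ^ β) := by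
        rw [zpow_neg, inv_inv, ← mul_assoc]
      rw [c1, c2, c3]
    have hY : Wl S (P ^ β) ≤ Wc + Wl S (cc * P ^ β) := by
      have t1 : Wl S (cc⁻¹ * (cc * P ^ β)) ≤ Wl S cc⁻¹ + Wl S (cc * P ^ β) :=
        wl_mul_le hgen _ _
      have e : cc⁻¹ * (cc * P ^ β) = P ^ β := by group
      rw [e, wl_inv hgen] at t1
      omega
    rw [expand]
    omega
  set T : ℕ → ℕ := fun r => 2 * Wc + r * Wsp with hT
  have hTle : ∀ r : ℕ, r ≤ NB → T r ≤ R0 := by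
    intro r hr
    rw [hT, hR0]
    simp only []
    have : r * Wsp ≤ (NB + 1) * Wsp := Nat.mul_le_mul_right Wsp (by omega)
    omega
  have hTgp : ∀ r : ℕ, r ≤ NB → 2 * ((T r : ℕ) : ℤ) ≤ gp S 1 (P ^ (-α)) (cc * P ^ β) := by
    intro r hr
    have h1 := hTle r hr
    have : ((T r : ℕ) : ℤ) ≤ (R0 : ℤ) := by exact_mod_cast h1
    omega
  have hdata : ∀ r : ℕ, ∃ i i' : ℤ, r ≤ NB →
      Wl S ((P ^ i)⁻¹ * fA (T r)) ≤ C9 ∧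
      Wl S ((P ^ i)⁻¹ * (cc * P ^ i')) ≤ C12 := by
    intro r
    by_cases hr : r ≤ NB
    · obtain ⟨i, i', h1, h2⟩ := core_data hgen h4 hL hstr cc hfA hAe hfY hYe hu' hu'e
        (t := T r) (hTgp r hr) (by simp only [hT]; omega)
      exact ⟨i, i', fun _ => ⟨h1, h2⟩⟩
    · exact ⟨0, 0, fun h => absurd h hr⟩
  choose I I' hII using hdata
  have hmaps : ∀ r ∈ Finset.range (NB + 1),
      (P ^ (I r))⁻¹ * (cc * P ^ (I' r)) ∈ ballFS hgen C12 := by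
    intro r hr
    simp only [Finset.mem_range] at hr
    exact (mem_ballFS hgen).2 ((hII r (by omega)).2)
  have hcard : (ballFS hgen C12).card < (Finset.range (NB + 1)).card := by
    simp [hNB]
  obtain ⟨x1, hx1, x2, hx2, hx12, heqv⟩ :=
    Finset.exists_ne_map_eq_of_card_lt_of_maps_to hcard hmaps
  simp only [Finset.mem_range] at hx1 hx2
  obtain ⟨r₁, r₂, hr₁, hr₂, hrlt, heq⟩ : ∃ r₁ r₂ : ℕ, r₁ ≤ NB ∧ r₂ ≤ NB ∧ r₁ < r₂ ∧
      (P ^ (I r₁))⁻¹ * (cc * P ^ (I' r₁)) = (P ^ (I r₂))⁻¹ * (cc * P ^ (I' r₂)) := by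
    rcases lt_or_gt_of_ne hx12 with h | h
    · exact ⟨x1, x2, by omega, by omega, h, heqv⟩
    · exact ⟨x2, x1, by omega, by omega, h, heqv.symm⟩
  -- the two axis exponents are distinct
  have hlenA : Wl S (P ^ (-α)) = Wl S (fA (Wl S (P ^ (-α)))) := by
    rw [hAe]
  have hIne : I r₁ ≠ I r₂ := by
    intro hcontra
    have hb1 := (hII r₁ hr₁).1
    have hb2 := (hII r₂ hr₂).1
    -- T r is within C9 of Wl (P ^ I r)
    have hTA : ∀ r : ℕ, r ≤ NB → T r ≤ Wl S (P ^ (-α)) := by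
      intro r hr
      have h1 := hTgp r hr
      have h2 := gp_le_left hgen 1 (P ^ (-α)) (cc * P ^ β)
      have h3 : Wl S ((1 : G)⁻¹ * P ^ (-α)) = Wl S (P ^ (-α)) := by
        rw [inv_one, one_mul]
      omega
    have close : ∀ r : ℕ, r ≤ NB → Wl S (P ^ (I r)) ≤ T r + C9 ∧
        T r ≤ Wl S (P ^ (I r)) + C9 := by
      intro r hr
      have hb := (hII r hr).1
      have heval : Wl S (fA (T r)) = T r := by
        have := hfA.eval (hTA r hr)
        simpa using this
      have := wl_close_power hgen hb
      omega
    have c1 := close r₁ hr₁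
    have c2 := close r₂ hr₂
    rw [hcontra] at c1
    -- T r₂ ≥ T r₁ + Wsp
    have hTstep : T r₁ + Wsp ≤ T r₂ := by
      rw [hT]
      simp only []
      have h1 : (r₁ + 1) * Wsp ≤ r₂ * Wsp := Nat.mul_le_mul_right Wsp (by omega)
      have h2 : (r₁ + 1) * Wsp = r₁ * Wsp + Wsp := by ring
      omega
    rw [hWsp] at hTstep
    omega
  -- extract the conjugation relation
  set a := I r₂ - I r₁ with ha
  set b := I' r₂ - I' r₁ with hb
  have hane : a ≠ 0 := by
    rw [ha]
    intro h0
    apply hIne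
    omega
  have h1p : P ^ (I r₂) * (P ^ (I r₁))⁻¹ = P ^ a := by
    rw [← zpow_neg, ← zpow_add]
    congr 1
  have h2p : P ^ (I' r₂) * (P ^ (I' r₁))⁻¹ = P ^ b := by
    rw [← zpow_neg, ← zpow_add]
    congr 1
  have hrel : cc⁻¹ * P ^ a * cc = P ^ b := by
    have l1 : P ^ (I r₂) * (((P ^ (I r₁))⁻¹ * (cc * P ^ (I' r₁))) * (P ^ (I' r₁))⁻¹) =
        P ^ a * cc := by
      rw [← h1p]
      group
    have l2 : P ^ (I r₂) * (((P ^ (I r₂))⁻¹ * (cc * P ^ (I' r₂))) * (P ^ (I' r₁))⁻¹) =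
        cc * (P ^ (I' r₂) * (P ^ (I' r₁))⁻¹) := by
      group
    rw [h2p] at l2
    have e : P ^ a * cc = cc * P ^ b := by
      rw [← l1, heq, l2]
    calc cc⁻¹ * P ^ a * cc = cc⁻¹ * (P ^ a * cc) := by group
      _ = cc⁻¹ * (cc * P ^ b) := by rw [e]
      _ = P ^ b := by group
  -- iterate the relation
  have hit : ∀ k : ℕ, cc⁻¹ * P ^ (a * k) * cc = P ^ (b * k) := by
    intro k
    induction k with
    | zero => simp
    | succ k ih =>
        have e1 : (a * ((k : ℤ) + 1)) = a * k + a := by ring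
        have e2 : (b * ((k : ℤ) + 1)) = b * k + b := by ring
        push_cast
        rw [e1, e2, zpow_add, zpow_add]
        calc cc⁻¹ * (P ^ (a * (k : ℤ)) * P ^ a) * cc
            = (cc⁻¹ * P ^ (a * (k : ℤ)) * cc) * (cc⁻¹ * P ^ a * cc) := by group
          _ = P ^ (b * (k : ℤ)) * P ^ b := by
              rw [ih, hrel]
  have hrev : ∀ k : ℕ, cc * P ^ (b * k) * cc⁻¹ = P ^ (a * k) := by
    intro k
    rw [← hit k]
    group
  have hitrev : ∀ k : ℕ, (cc⁻¹)⁻¹ * P ^ (b * k) * cc⁻¹ = P ^ (a * k) := by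
    intro k
    rw [inv_inv]
    exact hrev k
  have hba : b.natAbs ≤ a.natAbs := straight_dominate hgen hL hstr hit
  have hab : a.natAbs ≤ b.natAbs := straight_dominate hgen hL hstr hitrev
  have habs : a.natAbs = b.natAbs := by omega
  have hbne : b ≠ 0 := by
    intro h0
    rw [h0] at habs
    simp at habs
    exact hane (by omega)
  rcases Int.natAbs_eq_natAbs_iff.1 habs with hcase | hcase
  · exact ⟨a, hane, Or.inl (by rw [hrel, hcase])⟩
  · exact ⟨a, hane, Or.inr (by rw [hrel, hcase]; congr 1; ring)⟩

lemma conj_rel_zpow {cc x y : G} (h : cc⁻¹ * x * cc = y) (j : ℤ) :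
    cc⁻¹ * x ^ j * cc = y ^ j := by
  have e : cc⁻¹ * x * (cc⁻¹)⁻¹ = y := by rwa [inv_inv]
  rw [← e, conj_zpow, inv_inv]

lemma zpow_conj_self (g : G) (x m : ℤ) : (g ^ x)⁻¹ * g ^ m * g ^ x = g ^ m := by
  rw [← zpow_neg, ← zpow_add, ← zpow_add]
  congr 1
  ring

lemma power_conj_zpow {g v P : G} {d : ℕ} {j : ℤ}
    (hgd : g ^ d = v * P ^ j * v⁻¹) (z : ℤ) :
    g ^ ((d : ℤ) * z) = v * P ^ (j * z) * v⁻¹ := by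
  calc g ^ ((d : ℤ) * z) = (g ^ (d : ℤ)) ^ z := by rw [zpow_mul]
    _ = (g ^ d) ^ z := by rw [zpow_natCast]
    _ = (v * P ^ j * v⁻¹) ^ z := by rw [hgd]
    _ = v * (P ^ j) ^ z * v⁻¹ := by rw [conj_zpow]
    _ = v * P ^ (j * z) * v⁻¹ := by rw [← zpow_mul]

/-- From the almost-commutation relation for the straight element, conclude `c ∈ Esub g`. -/
lemma esub_of_rel {g v P : G} {d : ℕ} {j : ℤ} (hd : 1 ≤ d) (hj : j ≠ 0)
    (hgd : g ^ d = v * P ^ j * v⁻¹) {r₁ r₂ : ℤ} {c : G} {a : ℤ} (ha : a ≠ 0)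
    (hrel : (v⁻¹ * (g ^ r₁ * c * g ^ r₂) * v)⁻¹ * P ^ a * (v⁻¹ * (g ^ r₁ * c * g ^ r₂) * v)
        = P ^ a ∨
      (v⁻¹ * (g ^ r₁ * c * g ^ r₂) * v)⁻¹ * P ^ a * (v⁻¹ * (g ^ r₁ * c * g ^ r₂) * v)
        = P ^ (-a)) :
    c ∈ Esub g := by
  set c' := g ^ r₁ * c * g ^ r₂ with hc'
  set cc := v⁻¹ * c' * v with hcc
  set m : ℤ := (d : ℤ) * a with hm
  have hmne : m ≠ 0 := mul_ne_zero (by exact_mod_cast (by omega : d ≠ 0)) ha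
  have hgzm : g ^ m = v * P ^ (a * j) * v⁻¹ := by
    rw [hm, power_conj_zpow hgd a]
    congr 1
    ring
  have hkey : ∃ ε : ℤ, (ε = 1 ∨ ε = -1) ∧ cc⁻¹ * P ^ (a * j) * cc = P ^ (ε * (a * j)) := by
    rcases hrel with h | h
    · refine ⟨1, Or.inl rfl, ?_⟩
      have h2 := conj_rel_zpow h j
      rw [← zpow_mul] at h2
      rw [h2]
      congr 1
      ring
    · refine ⟨-1, Or.inr rfl, ?_⟩
      have h2 := conj_rel_zpow h j
      rw [← zpow_mul] at h2
      rw [h2, ← zpow_mul]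
      congr 1
      ring
  obtain ⟨ε, hε, hconj⟩ := hkey
  -- transfer back to g
  have hPm : P ^ (a * j) = v⁻¹ * g ^ m * v := by
    rw [hgzm]
    group
  have hPmε : P ^ (ε * (a * j)) = v⁻¹ * g ^ (ε * m) * v := by
    have h2 : g ^ (ε * m) = v * P ^ (ε * (a * j)) * v⁻¹ := by
      have h3 : ε * m = (d : ℤ) * (ε * a) := by rw [hm]; ring
      rw [h3, power_conj_zpow hgd (ε * a)]
      congr 1
      ring
    rw [h2]
    group
  rw [hPm, hPmε, hcc] at hconj
  have hc'g : c'⁻¹ * g ^ m * c' = g ^ (ε * m) := by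
    have expand : (v⁻¹ * c' * v)⁻¹ * (v⁻¹ * g ^ m * v) * (v⁻¹ * c' * v) =
        v⁻¹ * (c'⁻¹ * g ^ m * c') * v := by group
    rw [expand] at hconj
    calc c'⁻¹ * g ^ m * c' = v * (v⁻¹ * (c'⁻¹ * g ^ m * c') * v) * v⁻¹ := by group
      _ = v * (v⁻¹ * g ^ (ε * m) * v) * v⁻¹ := by rw [hconj]
      _ = g ^ (ε * m) := by group
  -- strip off the g-power conjugators
  have hcg : c⁻¹ * g ^ m * c = g ^ (ε * m) := by
    have expand2 : c'⁻¹ * g ^ m * c' =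
        (g ^ r₂)⁻¹ * (c⁻¹ * ((g ^ r₁)⁻¹ * g ^ m * g ^ r₁) * c) * g ^ r₂ := by
      rw [hc']
      group
    rw [zpow_conj_self g r₁ m] at expand2
    rw [expand2] at hc'g
    calc c⁻¹ * g ^ m * c
        = g ^ r₂ * ((g ^ r₂)⁻¹ * (c⁻¹ * g ^ m * c) * g ^ r₂) * (g ^ r₂)⁻¹ := by group
      _ = g ^ r₂ * g ^ (ε * m) * (g ^ r₂)⁻¹ := by rw [hc'g]
      _ = g ^ (ε * m) := by
          have := zpow_conj_self g (-r₂) (ε * m)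
          rw [zpow_neg, inv_inv] at this
          rw [← this]
          group
  refine ⟨m, hmne, ?_⟩
  rcases hε with rfl | rfl
  · left
    rw [hcg]
    congr 1
    ring
  · right
    rw [hcg]
    congr 1
    ring

lemma wl_zpow_le (hgen : Subgroup.closure (S : Set G) = ⊤) (g : G) (r : ℤ) :
    Wl S (g ^ r) ≤ r.natAbs * Wl S g := by
  rcases Int.natAbs_eq r with h | h
  · rw [h, zpow_natCast]
    exact wl_pow_le hgen g r.natAbs
  · rw [h, zpow_neg, zpow_natCast]
    rw [wl_inv hgen]
    have := wl_pow_le hgen g r.natAbs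
    have e : (-(r.natAbs : ℤ)).natAbs = r.natAbs := by omega
    rw [e]
    exact this

end Build
end P24

open P24

set_option maxHeartbeats 1000000

/-- Proposition 2.4: if `g` has infinite order in a word-hyperbolic group with
hyperbolicity witnessed by the finite generating set `S`, and `c ∉ E(g)`, then there is
a constant `K > 0` with `|gⁿ c g^m|_S ≥ |gⁿ|_S + |g^m|_S - K` for all integers `m, n`. -/
theorem wordLength_zpow_mul_zpow_ge {G : Type*} [Group G]
    (S : Finset G) (hgen : Subgroup.closure (S : Set G) = ⊤)
    (δ : ℝ) (hδ : 0 ≤ δ) (hhyp : GromovFourPoint (S : Set G) δ)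
    (g : G) (hg : ¬IsOfFinOrder g) (c : G) (hc : c ∉ Esub g) :
    ∃ K : ℝ, 0 < K ∧ ∀ m n : ℤ,
      (wordLength (S : Set G) (g ^ n * c * g ^ m) : ℝ) ≥
        (wordLength (S : Set G) (g ^ n) : ℝ) + (wordLength (S : Set G) (g ^ m) : ℝ) - K := by
  classical
  set D : ℕ := ⌈2 * δ⌉₊ with hD
  have h4 : ∀ x y z w : G, Wl S (x⁻¹ * y) + Wl S (z⁻¹ * w) ≤
      max (Wl S (x⁻¹ * z) + Wl S (y⁻¹ * w)) (Wl S (x⁻¹ * w) + Wl S (y⁻¹ * z)) + D := by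
    intro x y z w
    have h1 := hhyp x y z w
    have h2 : 2 * δ ≤ (D : ℝ) := Nat.le_ceil (2 * δ)
    have h3 : ((Wl S (x⁻¹ * y) : ℝ) + Wl S (z⁻¹ * w)) ≤
        max ((Wl S (x⁻¹ * z) : ℝ) + Wl S (y⁻¹ * w)) ((Wl S (x⁻¹ * w) : ℝ) + Wl S (y⁻¹ * z))
          + D := by
      calc ((Wl S (x⁻¹ * y) : ℝ) + Wl S (z⁻¹ * w)) ≤
          max ((Wl S (x⁻¹ * z) : ℝ) + Wl S (y⁻¹ * w)) ((Wl S (x⁻¹ * w) : ℝ) + Wl S (y⁻¹ * z))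
            + 2 * δ := h1
        _ ≤ _ := by linarith
    have h4' : ((Wl S (x⁻¹ * y) + Wl S (z⁻¹ * w) : ℕ) : ℝ) ≤
        ((max (Wl S (x⁻¹ * z) + Wl S (y⁻¹ * w)) (Wl S (x⁻¹ * w) + Wl S (y⁻¹ * z)) + D : ℕ) : ℝ)
        := by
      push_cast [Nat.cast_max]
      exact h3
    exact_mod_cast h4'
  obtain ⟨v, P, L, d, j, hL, hd, hj, hstr, hgd⟩ := exists_power_eq hgen h4 hg
  -- a uniform constant for every remainder pair
  have hKex : ∀ p : ℤ × ℤ, ∃ K0 : ℕ, ∀ α β : ℤ,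
      Wl S (P ^ α) + Wl S (P ^ β) ≤
        Wl S (P ^ α * (v⁻¹ * (g ^ p.1 * c * g ^ p.2) * v) * P ^ β) + K0 := by
    intro p
    rcases core_dichotomy hgen h4 hL hstr (v⁻¹ * (g ^ p.1 * c * g ^ p.2) * v) with
      ⟨a, ha, hrel⟩ | ⟨K0, hK⟩
    · exact absurd (esub_of_rel hd hj hgd ha hrel) hc
    · exact ⟨K0, hK⟩
  choose K0f hK0f using hKex
  set RS : Finset (ℤ × ℤ) :=
    (Finset.Icc (0 : ℤ) ((d : ℤ) - 1)) ×ˢ (Finset.Icc (0 : ℤ) ((d : ℤ) - 1)) with hRS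
  set Kmax := RS.sup K0f with hKmax
  set Wv := Wl S v with hWv
  set BG := d * Wl S g with hBG
  set Kn : ℕ := Kmax + 6 * Wv + 2 * BG with hKn
  refine ⟨(Kn : ℝ) + 1, by positivity, ?_⟩
  intro m n
  -- decompose the exponents
  set qn := n / (d : ℤ) with hqn
  set rn := n % (d : ℤ) with hrn
  set qm := m / (d : ℤ) with hqm
  set rm := m % (d : ℤ) with hrm
  have hdz : (0 : ℤ) < (d : ℤ) := by exact_mod_cast hd
  have hrn1 : 0 ≤ rn := Int.emod_nonneg n (by omega)
  have hrn2 : rn < d := Int.emod_lt_of_pos n hdz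
  have hrm1 : 0 ≤ rm := Int.emod_nonneg m (by omega)
  have hrm2 : rm < d := Int.emod_lt_of_pos m hdz
  have hneq : (d : ℤ) * qn + rn = n := Int.mul_ediv_add_emod n d
  have hmeq : rm + (d : ℤ) * qm = m := Int.emod_add_mul_ediv m d
  set cc := v⁻¹ * (g ^ rn * c * g ^ rm) * v with hccdef
  -- the key algebraic identity
  have hgn : g ^ n = v * P ^ (j * qn) * v⁻¹ * g ^ rn := by
    calc g ^ n = g ^ ((d : ℤ) * qn + rn) := by rw [hneq]
      _ = g ^ ((d : ℤ) * qn) * g ^ rn := zpow_add g _ _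
      _ = v * P ^ (j * qn) * v⁻¹ * g ^ rn := by rw [power_conj_zpow hgd qn]
  have hgm : g ^ m = g ^ rm * (v * P ^ (j * qm) * v⁻¹) := by
    calc g ^ m = g ^ (rm + (d : ℤ) * qm) := by rw [hmeq]
      _ = g ^ rm * g ^ ((d : ℤ) * qm) := zpow_add g _ _
      _ = g ^ rm * (v * P ^ (j * qm) * v⁻¹) := by rw [power_conj_zpow hgd qm]
  have hmid : v⁻¹ * (g ^ n * c * g ^ m) * v = P ^ (j * qn) * cc * P ^ (j * qm) := by
    rw [hgn, hgm, hccdef]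
    group
  -- length estimates
  have hW1 : Wl S (P ^ (j * qn) * cc * P ^ (j * qm)) ≤
      Wl S (g ^ n * c * g ^ m) + 2 * Wv := by
    rw [← hmid]
    exact wl_conj_le hgen v (g ^ n * c * g ^ m)
  have hK0 : Wl S (P ^ (j * qn)) + Wl S (P ^ (j * qm)) ≤
      Wl S (P ^ (j * qn) * cc * P ^ (j * qm)) + Kmax := by
    have hmem : (rn, rm) ∈ RS := by
      rw [hRS]
      rw [Finset.mem_product]
      constructor <;> rw [Finset.mem_Icc] <;> omega
    have hsup : K0f (rn, rm) ≤ Kmax := Finset.le_sup hmem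
    have := hK0f (rn, rm) (j * qn) (j * qm)
    simp only [hccdef] at this ⊢
    omega
  have hgrle : Wl S (g ^ rn) ≤ BG ∧ Wl S (g ^ rm) ≤ BG := by
    constructor
    · have h1 := wl_zpow_le hgen g rn
      have h2 : rn.natAbs ≤ d := by omega
      have h3 : rn.natAbs * Wl S g ≤ d * Wl S g := Nat.mul_le_mul_right _ h2
      rw [hBG]
      omega
    · have h1 := wl_zpow_le hgen g rm
      have h2 : rm.natAbs ≤ d := by omega
      have h3 : rm.natAbs * Wl S g ≤ d * Wl S g := Nat.mul_le_mul_right _ h2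
      rw [hBG]
      omega
  have hWn : Wl S (g ^ n) ≤ Wv + Wl S (P ^ (j * qn)) + Wv + BG := by
    rw [hgn]
    have t1 : Wl S (v * P ^ (j * qn) * v⁻¹ * g ^ rn) ≤
        Wl S (v * P ^ (j * qn) * v⁻¹) + Wl S (g ^ rn) := wl_mul_le hgen _ _
    have t2 : Wl S (v * P ^ (j * qn) * v⁻¹) ≤ Wl S (v * P ^ (j * qn)) + Wl S v⁻¹ :=
      wl_mul_le hgen _ _
    have t3 : Wl S (v * P ^ (j * qn)) ≤ Wl S v + Wl S (P ^ (j * qn)) := wl_mul_le hgen _ _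
    have t4 : Wl S v⁻¹ = Wv := wl_inv hgen v
    omega
  have hWm : Wl S (g ^ m) ≤ Wv + Wl S (P ^ (j * qm)) + Wv + BG := by
    rw [hgm]
    have t1 : Wl S (g ^ rm * (v * P ^ (j * qm) * v⁻¹)) ≤
        Wl S (g ^ rm) + Wl S (v * P ^ (j * qm) * v⁻¹) := wl_mul_le hgen _ _
    have t2 : Wl S (v * P ^ (j * qm) * v⁻¹) ≤ Wl S (v * P ^ (j * qm)) + Wl S v⁻¹ :=
      wl_mul_le hgen _ _
    have t3 : Wl S (v * P ^ (j * qm)) ≤ Wl S v + Wl S (P ^ (j * qm)) := wl_mul_le hgen _ _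
    have t4 : Wl S v⁻¹ = Wv := wl_inv hgen v
    omega
  have main : Wl S (g ^ n) + Wl S (g ^ m) ≤ Wl S (g ^ n * c * g ^ m) + Kn := by
    rw [hKn]
    omega
  have final : ((Wl S (g ^ n) : ℝ) + Wl S (g ^ m)) ≤ (Wl S (g ^ n * c * g ^ m) : ℝ) + Kn := by
    exact_mod_cast main
  show (Wl S (g ^ n * c * g ^ m) : ℝ) ≥ (Wl S (g ^ n) : ℝ) + (Wl S (g ^ m) : ℝ) - ((Kn : ℝ) + 1)
  linarith
end
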